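/- arXiv:1209.6481 — 10 statements merged into one kernel-verified Lean document; each statement's English description precedes it below -/
import Mathlib

section
/- Fix a real α > 1 and an integer n ≥ 4, and take a single processor (m = 1). Consider the instance with jobs J_1, …, J_n where, for 1 ≤ j ≤ n−1, job J_j has work w_j = 1, release date r_j = 2j−1 and deadline d_j = 2j, and job J_n has work w_n = n, release date r_n = 0 and deadline d_n = 2n−1. Then there exists a feasible non-preemptive single-processor schedule for this instance whose energy equals 3·((n+2)/3)^α + (n−3) (namely: jobs J_1, J_n, J_2 are executed consecutively at constant speed (n+2)/3 within the interval [1, 4], and each job J_j with 3 ≤ j ≤ n−1 is executed at speed 1 during [2j−1, 2j]). -/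
/-- A feasible non-preemptive schedule on `m` identical speed-scalable processors:
each job `j` is assigned a processor `proc j`, a start time `start j ≥ r j` and a
processing time `len j > 0` with `start j + len j ≤ d j`, and the open execution
intervals of distinct jobs on the same processor are pairwise disjoint. -/
structure NPSchedule (ι : Type) [Fintype ι] (m : ℕ) (w r d : ι → ℝ) where
  proc : ι → Fin m
  start : ι → ℝ
  len : ι → ℝ
  len_pos : ∀ j, 0 < len j
  start_ge : ∀ j, r j ≤ start j
  end_le : ∀ j, start j + len j ≤ d j
  disjoint_jobs : ∀ j j', j ≠ j' → proc j = proc j' →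
    Disjoint (Set.Ioo (start j) (start j + len j)) (Set.Ioo (start j') (start j' + len j'))

/-- The energy consumption of a non-preemptive schedule: job `j` runs at constant speed
`w j / len j` and consumes energy `w j * (w j / len j) ^ (α - 1)`. -/
noncomputable def npEnergy {ι : Type} [Fintype ι] {m : ℕ} {w r d : ι → ℝ}
    (α : ℝ) (S : NPSchedule ι m w r d) : ℝ :=
  ∑ j, w j * (w j / S.len j) ^ (α - 1)
/-- The works of the hard instance: jobs `1, …, n-1` (represented by `j : Fin n` with
`j + 1 < n`) have unit work, and job `n` (with `j + 1 = n`) has work `n`. -/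
noncomputable def hardW (n : ℕ) (j : Fin n) : ℝ :=
  if (j : ℕ) + 1 = n then (n : ℝ) else 1

/-- The release dates of the hard instance: job `j` (for `1 ≤ j ≤ n-1`) is released at
time `2j - 1`, and job `n` is released at time `0`. -/
noncomputable def hardR (n : ℕ) (j : Fin n) : ℝ :=
  if (j : ℕ) + 1 = n then 0 else 2 * ((j : ℕ) + 1 : ℝ) - 1

/-- The deadlines of the hard instance: job `j` (for `1 ≤ j ≤ n-1`) has deadline `2j`,
and job `n` has deadline `2n - 1`. -/
noncomputable def hardD (n : ℕ) (j : Fin n) : ℝ :=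
  if (j : ℕ) + 1 = n then 2 * (n : ℝ) - 1 else 2 * ((j : ℕ) + 1 : ℝ)

lemma ioo_disj_aux {a b c d : ℝ} (h : b ≤ c) :
    Disjoint (Set.Ioo a b) (Set.Ioo c d) := by
  rw [Set.disjoint_left]
  rintro x ⟨_, hxb⟩ ⟨hcx, _⟩
  linarith

/-- For the hard instance (jobs `1, …, n-1` of unit work with active intervals
`[2j-1, 2j]`, and job `n` of work `n` with active interval `[0, 2n-1]`) on a single
processor, with `n ≥ 4`, there exists a feasible non-preemptive schedule whose energy
equals `3 ((n+2)/3)^α + (n - 3)` (jobs `J_1, J_n, J_2` are run consecutively at speed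
`(n+2)/3` inside `[1,4]`, and each `J_j` for `3 ≤ j ≤ n-1` at speed 1 in `[2j-1, 2j]`). -/
theorem hard_instance_nonpreemptive_upper (α : ℝ) (hα : 1 < α) (n : ℕ) (hn : 4 ≤ n) :
    ∃ S : NPSchedule (Fin n) 1 (hardW n) (hardR n) (hardD n),
      npEnergy α S = 3 * (((n : ℝ) + 2) / 3) ^ α + ((n : ℝ) - 3) := by
  have hn' : (4:ℝ) ≤ (n:ℝ) := by exact_mod_cast hn
  set X : ℝ := ((n:ℝ) + 2) / 3 with hXdef
  set c : ℝ := 3 / ((n:ℝ) + 2) with hcdef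
  have hden : (0:ℝ) < (n:ℝ) + 2 := by linarith
  have hcpos : 0 < c := by rw [hcdef]; positivity
  have hXpos : 0 < X := by rw [hXdef]; positivity
  have hnc : (n:ℝ) * c = 3 - 2 * c := by rw [hcdef]; field_simp; ring
  have hchalf : c ≤ 1/2 := by rw [hcdef, div_le_iff₀ hden]; linarith
  have hX3 : 3 * X = (n:ℝ) + 2 := by rw [hXdef]; field_simp
  have h1c : 1 / c = X := by rw [hcdef, hXdef, one_div_div]
  have hnnc : (n:ℝ) / ((n:ℝ) * c) = X := by
    rw [← h1c]
    rw [div_eq_div_iff (by positivity) (by positivity)]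
    ring
  refine ⟨{ proc := fun _ => 0
          , start := fun j => if (j:ℕ) + 1 = n then 1 + c else
              if (j:ℕ) = 0 then 1 else if (j:ℕ) = 1 then 4 - c else 2 * ((j:ℕ):ℝ) + 1
          , len := fun j => if (j:ℕ) + 1 = n then (n:ℝ) * c else
              if (j:ℕ) = 0 then c else if (j:ℕ) = 1 then c else 1
          , len_pos := ?_, start_ge := ?_, end_le := ?_, disjoint_jobs := ?_ }, ?_⟩
  · intro j; split_ifs
    · exact mul_pos (by linarith) hcpos
    · exact hcpos
    · exact hcpos
    · exact one_pos
  · intro j; dsimp only [hardR]; split_ifs with h1 h2 h3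
    · linarith
    · have hc0 : ((j:ℕ):ℝ) = 0 := by exact_mod_cast h2
      rw [hc0]; linarith
    · have hc1 : ((j:ℕ):ℝ) = 1 := by exact_mod_cast h3
      rw [hc1]; linarith
    · linarith
  · intro j; dsimp only [hardD]; split_ifs with h1 h2 h3
    · linarith [hnc]
    · have hc0 : ((j:ℕ):ℝ) = 0 := by exact_mod_cast h2
      rw [hc0]; linarith
    · have hc1 : ((j:ℕ):ℝ) = 1 := by exact_mod_cast h3
      rw [hc1]; linarith
    · linarith
  · intro j j' hne _
    have hvne : (j:ℕ) ≠ (j':ℕ) := fun h => hne (Fin.ext h)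
    have hgap : ((j:ℕ):ℝ) + 1 ≤ ((j':ℕ):ℝ) ∨ ((j':ℕ):ℝ) + 1 ≤ ((j:ℕ):ℝ) := by
      rcases Nat.lt_or_ge (j:ℕ) (j':ℕ) with h | h
      · left
        have h2 : (j:ℕ) + 1 ≤ (j':ℕ) := h
        exact_mod_cast h2
      · right
        have h2 : (j':ℕ) + 1 ≤ (j:ℕ) := Nat.lt_of_le_of_ne h hvne.symm
        exact_mod_cast h2
    try dsimp only
    split_ifs
    all_goals try (have hj2 : (2:ℝ) ≤ ((j:ℕ):ℝ) := by exact_mod_cast (by omega : 2 ≤ (j:ℕ)))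
    all_goals try (have hj2' : (2:ℝ) ≤ ((j':ℕ):ℝ) := by exact_mod_cast (by omega : 2 ≤ (j':ℕ)))
    all_goals rcases hgap with hg | hg
    all_goals (
      first
      | (exfalso; omega)
      | (refine ioo_disj_aux ?_; linarith [hnc, hcpos, hchalf, hn'])
      | (refine Disjoint.symm (ioo_disj_aux ?_); linarith [hnc, hcpos, hchalf, hn']))
  · simp only [npEnergy]
    try dsimp only
    have hstep : ∀ j : Fin n,
        hardW n j * (hardW n j / (if (j:ℕ) + 1 = n then (n:ℝ) * c else
            if (j:ℕ) = 0 then c else if (j:ℕ) = 1 then c else 1)) ^ (α - 1)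
          = (1:ℝ) + ((if (j:ℕ) = 0 then X ^ (α-1) - 1 else 0)
              + ((if (j:ℕ) = 1 then X ^ (α-1) - 1 else 0)
                + (if (j:ℕ) = n - 1 then (n:ℝ) * X ^ (α-1) - 1 else 0))) := by
      intro j
      simp only [hardW]
      by_cases h1 : (j:ℕ) + 1 = n
      · have e1 : (j:ℕ) ≠ 0 := by omega
        have e2 : (j:ℕ) ≠ 1 := by omega
        have e3 : (j:ℕ) = n - 1 := by omega
        rw [if_pos h1, if_pos h1, if_neg e1, if_neg e2, if_pos e3, hnnc]
        ring
      · have e3 : (j:ℕ) ≠ n - 1 := by omega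
        rw [if_neg h1, if_neg h1]
        by_cases h2 : (j:ℕ) = 0
        · rw [if_pos h2, if_pos h2, if_neg (by omega), if_neg e3, h1c]
          ring
        · rw [if_neg h2, if_neg h2]
          by_cases h3 : (j:ℕ) = 1
          · rw [if_pos h3, if_pos h3, if_neg e3, h1c]
            ring
          · rw [if_neg h3, if_neg h3, if_neg e3]
            norm_num [Real.one_rpow]
    rw [Finset.sum_congr rfl fun j _ => hstep j]
    rw [Fin.sum_univ_eq_sum_range (fun i : ℕ => (1:ℝ) + ((if i = 0 then X ^ (α-1) - 1 else 0)
          + ((if i = 1 then X ^ (α-1) - 1 else 0)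
            + (if i = n - 1 then (n:ℝ) * X ^ (α-1) - 1 else 0))))]
    rw [Finset.sum_add_distrib, Finset.sum_add_distrib, Finset.sum_add_distrib,
      Finset.sum_const, Finset.sum_ite_eq', Finset.sum_ite_eq', Finset.sum_ite_eq']
    rw [if_pos (Finset.mem_range.mpr (by omega : 0 < n)),
      if_pos (Finset.mem_range.mpr (by omega : 1 < n)),
      if_pos (Finset.mem_range.mpr (by omega : n - 1 < n)),
      Finset.card_range, nsmul_eq_mul, mul_one]
    have hXa : X ^ α = X ^ (α - 1) * X := by
      rw [← Real.rpow_add_one (ne_of_gt hXpos) (α - 1)]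
      norm_num
    rw [hXa]
    linear_combination X ^ (α - 1) * hX3
end

section
/- Fix a real α > 1 and an integer n ≥ 3, and take a single processor (m = 1). Consider the instance with jobs J_1, …, J_n where, for 1 ≤ j ≤ n−1, job J_j has work w_j = 1, release date r_j = 2j−1 and deadline d_j = 2j, and job J_n has work w_n = n, release date r_n = 0 and deadline d_n = 2n−1. Then every feasible non-preemptive single-processor schedule for this instance has energy at least n·(n/3)^(α−1). Consequently the ratio of the minimum non-preemptive energy to the minimum preemptive energy for this instance is at least n^α / (3^(α−1)·(2n−1)), which grows as Θ(n^(α−1)). -/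
open MeasureTheory Set

/-- A feasible preemptive (migratory) schedule on `m` identical speed-scalable
processors, for an instance given by jobs `ι` with works `w`, release dates `r` and
deadlines `d`: each job `j` gets a constant speed `speed j > 0` and, on each processor
`i`, a measurable set `A i j ⊆ [r j, d j]` of execution times; distinct jobs are
disjoint on each processor, a job never runs on two processors simultaneously, and the
total execution time times the speed equals the work. -/
structure PreemptiveSchedule (ι : Type) [Fintype ι] (m : ℕ) (w r d : ι → ℝ) where
  speed : ι → ℝ
  A : Fin m → ι → Set ℝ
  speed_pos : ∀ j, 0 < speed j
  measurableSet_A : ∀ i j, MeasurableSet (A i j)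
  A_subset : ∀ i j, A i j ⊆ Icc (r j) (d j)
  disjoint_jobs : ∀ i, ∀ j j', j ≠ j' → Disjoint (A i j) (A i j')
  disjoint_procs : ∀ j, ∀ i i', i ≠ i' → Disjoint (A i j) (A i' j)
  work_done : ∀ j, speed j * ∑ i, (volume (A i j)).toReal = w j

/-- The energy consumption of a preemptive schedule: each job `j` of work `w j` run at
constant speed `s_j` consumes energy `w j * s_j ^ (α - 1)`. -/
noncomputable def pEnergy {ι : Type} [Fintype ι] {m : ℕ} {w r d : ι → ℝ}
    (α : ℝ) (S : PreemptiveSchedule ι m w r d) : ℝ :=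
  ∑ j, w j * S.speed j ^ (α - 1)

/-!
On one processor the last job, of work `n` and window `[0, 2n - 1]`, runs in a single interval,
and that interval cannot contain the window `[2j - 1, 2j]` of any unit job, because the unit job
runs inside its window. Every interval in `[0, 2n - 1]` longer than `3` contains such a window,
so the last job runs for at most `3` time units, at speed at least `n / 3`. Preemptively, every
job can run at speed `1`, the last job filling the gaps `(2k, 2k + 1)`, for an energy of
`∑ w_j = 2n - 1`.
-/

open Function

theorem disjoint_Ioo_natCast {α : Type*} [Ring α] [PartialOrder α] [IsOrderedRing α]
    {m m' : ℕ} (h : m ≠ m') : Disjoint (Ioo (m : α) (m + 1)) (Ioo (m' : α) (m' + 1)) := by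
  simpa [onFun] using
    pairwise_disjoint_Ioo_intCast α ((Nat.cast_injective (R := ℤ)).ne h)

theorem exists_odd_nat_mem_Ioc {K : Type*} [Field K] [LinearOrder K] [IsStrictOrderedRing K]
    [FloorSemiring K] {a : K} (ha : -1 ≤ a) : ∃ k : ℕ, (2 * k + 1 : K) ∈ Ioc a (a + 2) := by
  refine ⟨⌊(a + 1) / 2⌋₊, ?_, ?_⟩
  · linarith [Nat.lt_floor_add_one ((a + 1) / 2)]
  · linarith [Nat.floor_le (show 0 ≤ (a + 1) / 2 by linarith)]

namespace NPSchedule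

variable {ι : Type} [Fintype ι] {m : ℕ} {w r d : ι → ℝ}

theorem release_lt_start_or_end_lt_deadline (S : NPSchedule ι m w r d) {i j : ι} (hij : i ≠ j)
    (hproc : S.proc i = S.proc j) : r j < S.start i ∨ S.start i + S.len i < d j := by
  by_contra! h
  have := S.start_ge j
  have := S.end_le j
  have := S.len_pos j
  have hmid : S.start j + S.len j / 2 ∈ Ioo (S.start j) (S.start j + S.len j) :=
    ⟨by linarith, by linarith⟩
  exact Set.disjoint_left.mp (S.disjoint_jobs j i hij.symm hproc.symm) hmid
    ⟨by linarith, by linarith⟩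

theorem le_npEnergy (α : ℝ) (S : NPSchedule ι m w r d) (hw : ∀ j, 0 ≤ w j) (j : ι) :
    w j * (w j / S.len j) ^ (α - 1) ≤ npEnergy α S :=
  Finset.single_le_sum (f := fun j => w j * (w j / S.len j) ^ (α - 1))
    (fun i _ => have := S.len_pos i; have := hw i; by positivity) (Finset.mem_univ j)

end NPSchedule

theorem PreemptiveSchedule.pEnergy_nonneg {ι : Type} [Fintype ι] {m : ℕ} {w r d : ι → ℝ}
    (α : ℝ) (S : PreemptiveSchedule ι m w r d) (hw : ∀ j, 0 ≤ w j) : 0 ≤ pEnergy α S :=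
  Finset.sum_nonneg fun j _ => have := S.speed_pos j; have := hw j; by positivity

section UnitSlots

variable {ι : Type} [Fintype ι] {w r d : ι → ℝ} (T : ι → Finset ℕ)
  (hT : Pairwise (Disjoint on T)) (hr : ∀ j, ∀ k ∈ T j, r j ≤ k)
  (hd : ∀ j, ∀ k ∈ T j, (k : ℝ) + 1 ≤ d j)

noncomputable def PreemptiveSchedule.ofUnitSlots (hw : ∀ j, w j = (T j).card) :
    PreemptiveSchedule ι 1 w r d where
  speed _ := 1
  A _ j := ⋃ k ∈ T j, Ioo (k : ℝ) (k + 1)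
  speed_pos _ := one_pos
  measurableSet_A _ _ := Finset.measurableSet_biUnion _ fun _ _ => measurableSet_Ioo
  A_subset _ j := iUnion₂_subset fun k hk =>
    Ioo_subset_Icc_self.trans (Icc_subset_Icc (hr j k hk) (hd j k hk))
  disjoint_jobs _ _ _ hne := disjoint_iUnion₂_left.mpr fun _ hk => disjoint_iUnion₂_right.mpr
    fun _ hk' => disjoint_Ioo_natCast fun h => Finset.disjoint_left.mp (hT hne) hk (h ▸ hk')
  disjoint_procs _ i i' h := absurd (Subsingleton.elim i i') h
  work_done j := by
    rw [Fin.sum_univ_one, one_mul, measure_biUnion_finset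
      (fun _ _ _ _ h => disjoint_Ioo_natCast h) fun _ _ => measurableSet_Ioo]
    simp [hw]

theorem PreemptiveSchedule.pEnergy_ofUnitSlots (α : ℝ) (hw : ∀ j, w j = (T j).card) :
    pEnergy α (ofUnitSlots T hT hr hd hw) = ∑ j, w j := by
  simp [pEnergy, ofUnitSlots]

noncomputable def NPSchedule.ofUnitSlots (hT₀ : ∀ j, (T j).Nonempty) :
    NPSchedule ι 1 w r d where
  proc _ := 0
  start j := (T j).min' (hT₀ j)
  len _ := 1
  len_pos _ := one_pos
  start_ge j := hr j _ (Finset.min'_mem _ _)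
  end_le j := hd j _ (Finset.min'_mem _ _)
  disjoint_jobs _ j hne _ := disjoint_Ioo_natCast fun h =>
    Finset.disjoint_left.mp (hT hne) (Finset.min'_mem _ _) (h ▸ Finset.min'_mem (T j) _)

end UnitSlots

section HardInstance

variable {n : ℕ}

theorem hardW_nonneg (j : Fin n) : 0 ≤ hardW n j := by
  unfold hardW; split <;> positivity

theorem sum_hardW (hn : 0 < n) : ∑ j, hardW n j = 2 * n - 1 := by
  obtain ⟨m, rfl⟩ : ∃ m, n = m + 1 := ⟨n - 1, by omega⟩
  rw [Fin.sum_univ_castSucc]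
  simp [hardW, fun x : Fin m => x.is_lt.ne]
  ring

theorem hardR_of_ne {j : Fin n} (hj : (j : ℕ) + 1 ≠ n) : hardR n j = 2 * j + 1 := by
  rw [hardR, if_neg hj]; ring

theorem hardD_of_ne {j : Fin n} (hj : (j : ℕ) + 1 ≠ n) : hardD n j = 2 * j + 2 := by
  rw [hardD, if_neg hj]; ring

theorem len_le_three_of_hard (S : NPSchedule (Fin n) 1 (hardW n) (hardR n) (hardD n))
    {N : Fin n} (hN : (N : ℕ) + 1 = n) : S.len N ≤ 3 := by
  by_contra! hlen
  have hstart : 0 ≤ S.start N := by simpa [hardR, hN] using S.start_ge N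
  have hend : S.start N + S.len N ≤ 2 * n - 1 := by simpa [hardD, hN] using S.end_le N
  obtain ⟨k, hk_lo, hk_hi⟩ := exists_odd_nat_mem_Ioc (by linarith : -1 ≤ S.start N)
  have hkn : k + 1 < n := by
    have : (k : ℝ) + 1 < n := by linarith
    exact_mod_cast this
  let K : Fin n := ⟨k, by omega⟩
  have hK : (K : ℕ) + 1 ≠ n := by simp only [K]; omega
  have hNK : N ≠ K := fun h => hK (h ▸ hN)
  have := S.release_lt_start_or_end_lt_deadline hNK (Subsingleton.elim _ _)
  rw [hardR_of_ne hK, hardD_of_ne hK] at this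
  rcases this with h | h <;> linarith

theorem le_npEnergy_of_hard {α : ℝ} (hα : 1 ≤ α) (hn : 0 < n)
    (S : NPSchedule (Fin n) 1 (hardW n) (hardR n) (hardD n)) :
    (n : ℝ) * ((n : ℝ) / 3) ^ (α - 1) ≤ npEnergy α S := by
  let N : Fin n := ⟨n - 1, by omega⟩
  have hN : (N : ℕ) + 1 = n := Nat.sub_add_cancel hn
  calc (n : ℝ) * ((n : ℝ) / 3) ^ (α - 1)
      ≤ hardW n N * (hardW n N / S.len N) ^ (α - 1) := by
        have := S.len_pos N
        rw [hardW, if_pos hN]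
        gcongr
        exact len_le_three_of_hard S hN
    _ ≤ npEnergy α S := S.le_npEnergy α hardW_nonneg N

def hardSlots (n : ℕ) (j : Fin n) : Finset ℕ :=
  if (j : ℕ) + 1 = n then (Finset.range n).image (2 * ·) else {2 * (j : ℕ) + 1}

theorem pairwise_disjoint_hardSlots : Pairwise (Disjoint on hardSlots n) := by
  intro i j hij
  have : (i : ℕ) ≠ j := Fin.val_ne_of_ne hij
  simp only [onFun, hardSlots]
  split_ifs <;> simp [Finset.disjoint_left] <;> omega

theorem hardSlots_nonempty (j : Fin n) : (hardSlots n j).Nonempty := by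
  unfold hardSlots; split_ifs <;> simp; omega

theorem hardR_le_of_mem_hardSlots (j : Fin n) (k : ℕ) (hk : k ∈ hardSlots n j) :
    hardR n j ≤ k := by
  unfold hardSlots at hk
  split_ifs at hk with hj
  · rw [hardR, if_pos hj]; positivity
  · rw [Finset.mem_singleton.mp hk, hardR_of_ne hj]; push_cast; rfl

theorem le_hardD_of_mem_hardSlots (j : Fin n) (k : ℕ) (hk : k ∈ hardSlots n j) :
    (k : ℝ) + 1 ≤ hardD n j := by
  unfold hardSlots at hk
  split_ifs at hk with hj
  · obtain ⟨i, hi, rfl⟩ := Finset.mem_image.mp hk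
    have : (i : ℝ) + 1 ≤ n := by exact_mod_cast Finset.mem_range.mp hi
    rw [hardD, if_pos hj]; push_cast; linarith
  · rw [Finset.mem_singleton.mp hk, hardD_of_ne hj]; push_cast; linarith

theorem hardW_eq_card_hardSlots (j : Fin n) : hardW n j = (hardSlots n j).card := by
  unfold hardW hardSlots
  split_ifs
  · rw [Finset.card_image_of_injective _ (mul_right_injective₀ two_ne_zero), Finset.card_range]
  · simp

theorem sInf_pEnergy_hard_le (α : ℝ) (hn : 0 < n) :
    sInf {E | ∃ S : PreemptiveSchedule (Fin n) 1 (hardW n) (hardR n) (hardD n),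
      pEnergy α S = E} ≤ 2 * n - 1 :=
  csInf_le ⟨0, by rintro _ ⟨S, rfl⟩; exact S.pEnergy_nonneg α hardW_nonneg⟩
    ⟨.ofUnitSlots (hardSlots n) pairwise_disjoint_hardSlots hardR_le_of_mem_hardSlots
        le_hardD_of_mem_hardSlots hardW_eq_card_hardSlots,
      by rw [PreemptiveSchedule.pEnergy_ofUnitSlots, sum_hardW hn]⟩

theorem le_sInf_npEnergy_hard {α : ℝ} (hα : 1 ≤ α) (hn : 0 < n) :
    (n : ℝ) * ((n : ℝ) / 3) ^ (α - 1) ≤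
      sInf {E | ∃ S : NPSchedule (Fin n) 1 (hardW n) (hardR n) (hardD n), npEnergy α S = E} :=
  le_csInf ⟨_, .ofUnitSlots (hardSlots n) pairwise_disjoint_hardSlots hardR_le_of_mem_hardSlots
      le_hardD_of_mem_hardSlots hardSlots_nonempty, rfl⟩
    (by rintro _ ⟨S, rfl⟩; exact le_npEnergy_of_hard hα hn S)

end HardInstance

/-- For the hard instance on a single processor with `n ≥ 3`, every feasible
non-preemptive schedule has energy at least `n (n/3)^(α-1)`; consequently the ratio of
the minimum non-preemptive energy to the minimum preemptive energy is at least
`n^α / (3^(α-1) (2n-1))`. -/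
theorem hard_instance_nonpreemptive_lower (α : ℝ) (hα : 1 < α) (n : ℕ) (hn : 3 ≤ n) :
    (∀ S : NPSchedule (Fin n) 1 (hardW n) (hardR n) (hardD n),
      (n : ℝ) * ((n : ℝ) / 3) ^ (α - 1) ≤ npEnergy α S) ∧
    ((n : ℝ) ^ α / (3 ^ (α - 1) * (2 * (n : ℝ) - 1))) *
        sInf {E | ∃ S : PreemptiveSchedule (Fin n) 1 (hardW n) (hardR n) (hardD n),
          pEnergy α S = E} ≤
      sInf {E | ∃ S : NPSchedule (Fin n) 1 (hardW n) (hardR n) (hardD n),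
          npEnergy α S = E} := by
  have hn₀ : 0 < n := by omega
  refine ⟨le_npEnergy_of_hard hα.le hn₀, ?_⟩
  have h2n : (0 : ℝ) < 2 * n - 1 := by
    have : (1 : ℝ) ≤ n := by exact_mod_cast hn₀
    linarith
  calc (n : ℝ) ^ α / (3 ^ (α - 1) * (2 * n - 1)) * sInf _
      ≤ (n : ℝ) ^ α / (3 ^ (α - 1) * (2 * n - 1)) * (2 * n - 1) := by
        gcongr
        exact sInf_pEnergy_hard_le α hn₀
    _ = n * (n / 3) ^ (α - 1) := by
        rw [Real.div_rpow (by positivity) (by norm_num),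
          Real.rpow_sub_one (by positivity : (n : ℝ) ≠ 0)]
        field_simp
    _ ≤ sInf _ := le_sInf_npEnergy_hard hα.le hn₀
end

section
/- Let m ≥ 1 be an integer, n ≥ 1 an integer, and let d_1 ≤ d_2 ≤ … ≤ d_n be positive reals and e_1, …, e_n ≥ 0 be reals such that for every k with 1 ≤ k ≤ n: e_k ≤ d_k and Σ_{j=1}^{k} e_j ≤ m·d_k. Set p_j = e_j/(2 − 1/m) for each j. Then there exist an assignment of each job j to one of m processors and start times σ_j ≥ 0 such that σ_j + p_j ≤ d_j for every j (when p_j > 0) and the open intervals (σ_j, σ_j + p_j) of distinct jobs assigned to the same processor are pairwise disjoint; i.e., the jobs with common release date 0, deadlines d_j and processing times p_j admit a feasible non-preemptive schedule on m processors (obtained by Earliest Deadline First list scheduling). -/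
/-!
Earliest-deadline-first list scheduling: take the jobs in index order and put each on a currently
least loaded machine, right after the jobs already there. Job `k` then starts at a time `σ_k` at
most the average load `(∑_{j<k} p_j) / m`. With `c = 2 - 1/m` and `p_j = e_j / c`, the hypothesis
`∑_{j≤k} e_j ≤ m d_k` gives `c σ_k + e_k ≤ d_k + (1 - 1/m) e_k`, and `e_k ≤ d_k` bounds
this by `c d_k`, i.e. `σ_k + p_k ≤ d_k`.
-/

open Finset

namespace ListScheduling

noncomputable def leastLoaded {ι α : Type*} [Finite ι] [Nonempty ι] [LinearOrder α]
    (L : ι → α) : ι :=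
  (Finite.exists_min L).choose

lemma leastLoaded_le {ι α : Type*} [Finite ι] [Nonempty ι] [LinearOrder α]
    (L : ι → α) (i : ι) : L (leastLoaded L) ≤ L i :=
  (Finite.exists_min L).choose_spec i

variable (ι : Type*) {α : Type*} [Fintype ι] [DecidableEq ι] [Nonempty ι]
  [AddCommMonoid α] [LinearOrder α]

/-- `loads ι p k i` is the load of machine `i` once jobs `0, …, k - 1` have each been placed, in
this order, on a least loaded machine. -/
noncomputable def loads (p : ℕ → α) : ℕ → ι → α
  | 0 => 0
  | k + 1 => Function.update (loads p k) (leastLoaded (loads p k))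
      (loads p k (leastLoaded (loads p k)) + p k)

noncomputable def machine (p : ℕ → α) (k : ℕ) : ι := leastLoaded (loads ι p k)

noncomputable def start (p : ℕ → α) (k : ℕ) : α := loads ι p k (machine ι p k)

variable {ι} (p : ℕ → α)

lemma loads_succ_machine (k : ℕ) : loads ι p (k + 1) (machine ι p k) = start ι p k + p k := by
  simp [loads, machine, start]

lemma loads_succ_of_ne {k : ℕ} {i : ι} (hi : i ≠ machine ι p k) :
    loads ι p (k + 1) i = loads ι p k i :=
  Function.update_of_ne hi _ _

lemma sum_loads (k : ℕ) : ∑ i, loads ι p k i = ∑ j ∈ range k, p j := by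
  induction k with
  | zero => simp [loads]
  | succ k ih =>
    rw [sum_range_succ, ← ih, loads, sum_update_of_mem (mem_univ _),
      ← add_sum_erase univ _ (mem_univ (leastLoaded (loads ι p k))), sdiff_singleton_eq_erase]
    abel

variable [IsOrderedAddMonoid α]

lemma card_nsmul_start_le (k : ℕ) :
    Fintype.card ι • start ι p k ≤ ∑ j ∈ range k, p j := by
  rw [← sum_loads (ι := ι)]
  exact card_nsmul_le_sum _ _ _ fun i _ ↦ leastLoaded_le _ i

variable {p} (hp : 0 ≤ p)
include hp

lemma loads_mono : Monotone (loads ι p) := by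
  refine monotone_nat_of_le_succ fun k i ↦ ?_
  by_cases hi : i = machine ι p k
  · subst hi
    rw [loads_succ_machine]
    exact le_add_of_nonneg_right (hp k)
  · rw [loads_succ_of_ne p hi]

lemma start_nonneg (k : ℕ) : 0 ≤ start ι p k :=
  loads_mono hp (Nat.zero_le k) _

lemma start_add_le_start {j k : ℕ} (hjk : j < k) (h : machine ι p j = machine ι p k) :
    start ι p j + p j ≤ start ι p k := by
  rw [← loads_succ_machine, start, ← h]
  exact loads_mono hp hjk _

lemma disjoint_Ioo_start {j k : ℕ} (hjk : j ≠ k) (h : machine ι p j = machine ι p k) :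
    Disjoint (Set.Ioo (start ι p j) (start ι p j + p j))
      (Set.Ioo (start ι p k) (start ι p k + p k)) := by
  wlog hlt : j < k generalizing j k
  · exact (this hjk.symm h.symm (hjk.lt_or_gt.resolve_left hlt)).symm
  exact (Set.Iic_disjoint_Ioi (start_add_le_start hp hlt h)).mono
    (Set.Ioo_subset_Ioc_self.trans Set.Ioc_subset_Iic_self) Set.Ioo_subset_Ioi_self

end ListScheduling

lemma two_sub_one_div_pos {m : ℝ} (hm : 1 ≤ m) : 0 < 2 - 1 / m := by
  have : 1 / m ≤ 1 := div_le_one_of_le₀ hm (by linarith)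
  linarith

lemma add_div_two_sub_one_div_le {m σ s e d : ℝ} (hm : 1 ≤ m)
    (hσ : m * σ ≤ s / (2 - 1 / m)) (hs : s + e ≤ m * d) (hed : e ≤ d) :
    σ + e / (2 - 1 / m) ≤ d := by
  have hmc : m * (2 - 1 / m) = 2 * m - 1 := by field_simp
  set c := 2 - 1 / m
  have hc : 0 < c := two_sub_one_div_pos hm
  rw [le_div_iff₀ hc] at hσ
  have key : m * (c * σ + e) ≤ m * (c * d) := calc
    m * (c * σ + e) = m * σ * c + m * e := by ring
    _ ≤ m * d + (m - 1) * e := by linarith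
    _ ≤ m * d + (m - 1) * d := by gcongr
    _ = m * (c * d) := by rw [← mul_assoc, hmc]; ring
  rw [← le_sub_iff_add_le', div_le_iff₀ hc]
  linarith [le_of_mul_le_mul_left key (by linarith)]

open ListScheduling in
theorem edf_feasibility_general (m n : ℕ) (hm : 1 ≤ m)
    (d e : Fin n → ℝ)
    (he : ∀ j, 0 ≤ e j)
    (hfeas1 : ∀ k, e k ≤ d k)
    (hfeas2 : ∀ k : Fin n, ∑ j ∈ Finset.Iic k, e j ≤ (m : ℝ) * d k) :
    ∃ (proc : Fin n → Fin m) (σ : Fin n → ℝ),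
      (∀ j, 0 ≤ σ j) ∧
      (∀ j, σ j + e j / (2 - 1 / (m : ℝ)) ≤ d j) ∧
      (∀ j j', j ≠ j' → proc j = proc j' →
        Disjoint (Set.Ioo (σ j) (σ j + e j / (2 - 1 / (m : ℝ))))
          (Set.Ioo (σ j') (σ j' + e j' / (2 - 1 / (m : ℝ))))) := by
  have : Nonempty (Fin m) := ⟨⟨0, hm⟩⟩
  have hmR : (1 : ℝ) ≤ m := by exact_mod_cast hm
  set c : ℝ := 2 - 1 / (m : ℝ)
  have hc : 0 < c := two_sub_one_div_pos hmR
  let p : ℕ → ℝ := fun i ↦ if h : i < n then e ⟨i, h⟩ / c else 0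
  have hp : 0 ≤ p := fun i ↦ by
    dsimp only [p]
    split_ifs
    exacts [div_nonneg (he _) hc.le, le_rfl]
  have hpj (j : Fin n) : p j = e j / c := by simp [p]
  have hsum (k : Fin n) : ∑ i ∈ range k, p i = (∑ j ∈ Iio k, e j) / c := by
    rw [← Nat.Iio_eq_range, ← Fin.map_valEmbedding_Iio, sum_map, sum_div]
    exact sum_congr rfl fun j _ ↦ hpj j
  refine ⟨fun j ↦ machine (Fin m) p j, fun j ↦ start (Fin m) p j, fun j ↦ start_nonneg hp j,
    fun k ↦ ?_, fun j k hjk h ↦ ?_⟩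
  · refine add_div_two_sub_one_div_le hmR ?_
      ((sum_Iio_add_eq_sum_Iic k).trans_le (hfeas2 k)) (hfeas1 k)
    simpa only [hsum, Fintype.card_fin, nsmul_eq_mul] using card_nsmul_start_le (ι := Fin m) p k
  · simpa only [hpj] using disjoint_Ioo_start hp (Fin.val_injective.ne hjk) h

/-- EDF list scheduling feasibility: given `n` jobs with common release date `0`,
positive deadlines `d 0 ≤ d 1 ≤ … ≤ d (n-1)` and nonnegative execution times `e j`
satisfying `e k ≤ d k` and `∑_{j ≤ k} e j ≤ m · d k` for every `k` (as holds for the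
per-job execution times of any feasible preemptive schedule), the jobs with processing
times `p j = e j / (2 - 1/m)` admit a feasible non-preemptive schedule on `m`
processors: each job gets a processor and a start time `σ j ≥ 0` with
`σ j + p j ≤ d j`, and jobs on the same processor occupy pairwise disjoint open
intervals. -/
theorem edf_feasibility (m n : ℕ) (hm : 1 ≤ m) (hn : 1 ≤ n)
    (d e : Fin n → ℝ) (hd_pos : ∀ j, 0 < d j) (hd_mono : Monotone d)
    (he : ∀ j, 0 ≤ e j)
    (hfeas1 : ∀ k, e k ≤ d k)
    (hfeas2 : ∀ k : Fin n, ∑ j ∈ Finset.Iic k, e j ≤ (m : ℝ) * d k) :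
    ∃ (proc : Fin n → Fin m) (σ : Fin n → ℝ),
      (∀ j, 0 ≤ σ j) ∧
      (∀ j, σ j + e j / (2 - 1 / (m : ℝ)) ≤ d j) ∧
      (∀ j j', j ≠ j' → proc j = proc j' →
        Disjoint (Set.Ioo (σ j) (σ j + e j / (2 - 1 / (m : ℝ))))
          (Set.Ioo (σ j') (σ j' + e j' / (2 - 1 / (m : ℝ))))) :=
  edf_feasibility_general m n hm d e he hfeas1 hfeas2
end

section
/- Fix a real α > 1 and an integer m ≥ 1. Suppose all jobs have common release date 0 (r_j = 0 for every job j). Then for every feasible preemptive schedule S_pr on m processors there exists a feasible non-preemptive schedule S_npr on m processors with E(S_npr) ≤ (2 − 1/m)^(α−1) · E(S_pr). In particular, since the minimum preemptive energy is a lower bound on the minimum non-preemptive energy, the minimum non-preemptive energy is at most (2 − 1/m)^(α−1) times the optimum, i.e., this yields a (2 − 1/m)^(α−1)-approximation for the problem S|r_j=0, d_j|E. -/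
open MeasureTheory Set

section Aux
variable {m : ℕ}

noncomputable def amin (hm : 0 < m) (f : Fin m → ℝ) : Fin m :=
  Classical.choose (Finset.exists_min_image Finset.univ f ⟨⟨0, hm⟩, Finset.mem_univ _⟩)

lemma amin_le (hm : 0 < m) (f : Fin m → ℝ) (i : Fin m) : f (amin hm f) ≤ f i :=
  (Classical.choose_spec
    (Finset.exists_min_image Finset.univ f ⟨⟨0, hm⟩, Finset.mem_univ _⟩)).2 i (Finset.mem_univ i)

noncomputable def loads (hm : 0 < m) (p : ℕ → ℝ) : ℕ → Fin m → ℝ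
  | 0 => fun _ => 0
  | k + 1 => fun i =>
      loads hm p k i + (if amin hm (loads hm p k) = i then p k else 0)

variable {hm : 0 < m} {p : ℕ → ℝ}

lemma loads_nonneg (hp : ∀ k, 0 ≤ p k) (k : ℕ) (i : Fin m) : 0 ≤ loads hm p k i := by
  induction k with
  | zero => simp [loads]
  | succ k ih =>
    simp only [loads]
    have : (0:ℝ) ≤ if amin hm (loads hm p k) = i then p k else 0 := by
      split <;> simp [hp k]
    linarith [ih]

lemma loads_mono (hp : ∀ k, 0 ≤ p k) {k k' : ℕ} (h : k ≤ k') (i : Fin m) :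
    loads hm p k i ≤ loads hm p k' i := by
  induction k' with
  | zero => simp [Nat.le_zero.mp h]
  | succ k' ih =>
    rcases Nat.lt_or_ge k (k'+1) with h1 | h1
    · have h2 := ih (Nat.lt_succ_iff.mp h1)
      simp only [loads]
      have : (0:ℝ) ≤ if amin hm (loads hm p k') = i then p k' else 0 := by
        split <;> simp [hp k']
      linarith
    · have : k = k' + 1 := le_antisymm h h1
      simp [this]

lemma sum_loads (k : ℕ) : ∑ i, loads hm p k i = ∑ k' ∈ Finset.range k, p k' := by
  induction k with
  | zero => simp [loads]
  | succ k ih =>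
    simp only [loads, Finset.sum_add_distrib, ih, Finset.sum_ite_eq, Finset.mem_univ,
      if_true, Finset.sum_range_succ]

lemma loads_succ_self (k : ℕ) :
    loads hm p (k+1) (amin hm (loads hm p k)) = loads hm p k (amin hm (loads hm p k)) + p k := by
  simp [loads]

lemma sum_vol_le {β : Type*} (s : Finset β) (f : β → Set ℝ) {D : ℝ} (hD : 0 ≤ D)
    (hmeas : ∀ b ∈ s, MeasurableSet (f b)) (hsub : ∀ b ∈ s, f b ⊆ Icc 0 D)
    (hdisj : (↑s : Set β).PairwiseDisjoint f) :
    ∑ b ∈ s, (volume (f b)).toReal ≤ D := by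
  have hfin : ∀ b ∈ s, volume (f b) ≠ ⊤ := by
    intro b hb
    exact ne_top_of_le_ne_top (by simp [Real.volume_Icc]) (measure_mono (hsub b hb))
  rw [← ENNReal.toReal_sum hfin, ← measure_biUnion_finset hdisj hmeas]
  apply ENNReal.toReal_le_of_le_ofReal hD
  calc volume (⋃ b ∈ s, f b) ≤ volume (Icc (0:ℝ) D) := measure_mono (by
        simp only [iUnion_subset_iff]; exact hsub)
    _ = ENNReal.ofReal D := by simp [Real.volume_Icc]

end Aux

/-- Theorem 1 (common release dates): for `α > 1` and `m ≥ 1` processors, if all jobs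
have release date `0`, then for every feasible preemptive schedule there exists a
feasible non-preemptive schedule whose energy is at most `(2 - 1/m)^(α-1)` times the
energy of the preemptive schedule. Since the minimum preemptive energy lower-bounds
the minimum non-preemptive energy, this yields a `(2 - 1/m)^(α-1)`-approximation for
`S|r_j=0, d_j|E`. -/
theorem common_release_dates (ι : Type) [Fintype ι] (α : ℝ) (hα : 1 < α)
    (m : ℕ) (hm : 1 ≤ m) (w d : ι → ℝ)
    (hw : ∀ j, 0 < w j) (hd : ∀ j, 0 < d j)
    (Spr : PreemptiveSchedule ι m w (fun _ => 0) d) :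
    ∃ Snpr : NPSchedule ι m w (fun _ => 0) d,
      npEnergy α Snpr ≤ (2 - 1 / (m : ℝ)) ^ (α - 1) * pEnergy α Spr := by
  classical
  have hm' : 0 < m := hm
  set n := Fintype.card ι with hn
  set eq0 : ι ≃ Fin n := Fintype.equivFin ι with heq0
  set σ : Equiv.Perm (Fin n) := Tuple.sort (d ∘ eq0.symm) with hσ
  set E : ι ≃ Fin n := eq0.trans σ.symm with hE
  set g : Fin n → ι := fun k => E.symm k with hg
  have hgE : ∀ j, g (E j) = j := fun j => E.symm_apply_apply j
  have hginj : Function.Injective g := E.symm.injective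
  have hmono : Monotone (fun k : Fin n => d (g k)) :=
    Tuple.monotone_sort (d ∘ eq0.symm)
  set A' : Fin m → ℕ → Set ℝ := fun i k => if h : k < n then Spr.A i (g ⟨k, h⟩) else ∅ with hA'
  set tval : ℕ → ℝ := fun k => ∑ i, (volume (A' i k)).toReal with htval
  have hA'k : ∀ (i : Fin m) (k : Fin n), A' i (k : ℕ) = Spr.A i (g k) := by
    intro i k; simp only [hA', dif_pos k.isLt, Fin.eta]
  have htvalk : ∀ k : Fin n, tval (k : ℕ) = ∑ i, (volume (Spr.A i (g k))).toReal := by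
    intro k; simp only [htval]
    exact Finset.sum_congr rfl fun i _ => by rw [hA'k]
  have htvw : ∀ k : Fin n, Spr.speed (g k) * tval (k : ℕ) = w (g k) := by
    intro k; rw [htvalk]; exact Spr.work_done (g k)
  have htpos : ∀ k : Fin n, 0 < tval (k : ℕ) := by
    intro k
    have h2 := Spr.speed_pos (g k)
    have : tval (k : ℕ) = w (g k) / Spr.speed (g k) := by
      rw [eq_div_iff h2.ne']; linear_combination htvw k
    rw [this]; exact div_pos (hw _) h2
  set c : ℝ := 2 - 1 / (m : ℝ) with hc
  have hm1 : (1 : ℝ) ≤ (m : ℝ) := by exact_mod_cast hm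
  have hmpos : (0 : ℝ) < m := by linarith
  have hinv : 1 / (m : ℝ) ≤ 1 := by rw [div_le_one hmpos]; exact hm1
  have hc1 : 1 ≤ c := by rw [hc]; linarith
  have hc0 : 0 < c := by linarith
  set p : ℕ → ℝ := fun k => tval k / c with hp
  have hp0 : ∀ k, 0 ≤ p k := by
    intro k
    apply div_nonneg _ hc0.le
    simp only [htval]
    exact Finset.sum_nonneg fun i _ => ENNReal.toReal_nonneg
  have hppos : ∀ k : Fin n, 0 < p (k : ℕ) := fun k => div_pos (htpos k) hc0
  -- measure bounds
  have htled : ∀ k : Fin n, tval (k : ℕ) ≤ d (g k) := by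
    intro k
    rw [htvalk]
    apply sum_vol_le Finset.univ (fun i => Spr.A i (g k)) (hd _).le
    · intro i _; exact Spr.measurableSet_A i _
    · intro i _; exact Spr.A_subset i _
    · intro i _ i' _ hii'; exact Spr.disjoint_procs (g k) i i' hii'
  have hkey : ∀ k : Fin n, ∑ k' ∈ Finset.range ((k : ℕ) + 1), tval k' ≤ m * d (g k) := by
    intro k
    have hswap : ∑ k' ∈ Finset.range ((k : ℕ) + 1), tval k'
        = ∑ i : Fin m, ∑ k' ∈ Finset.range ((k : ℕ) + 1), (volume (A' i k')).toReal := by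
      simp only [htval]; rw [Finset.sum_comm]
    rw [hswap]
    have hbound : ∀ i : Fin m,
        ∑ k' ∈ Finset.range ((k : ℕ) + 1), (volume (A' i k')).toReal ≤ d (g k) := by
      intro i
      apply sum_vol_le _ _ (hd _).le
      · intro b _
        simp only [hA']
        split
        · exact Spr.measurableSet_A _ _
        · exact MeasurableSet.empty
      · intro b hb
        simp only [Finset.mem_range, Nat.lt_succ_iff] at hb
        have hbn : b < n := lt_of_le_of_lt hb k.isLt
        have hAb : A' i b = Spr.A i (g ⟨b, hbn⟩) := by simp only [hA', dif_pos hbn]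
        rw [hAb]
        refine (Spr.A_subset i _).trans (Icc_subset_Icc le_rfl ?_)
        exact hmono (show (⟨b, hbn⟩ : Fin n) ≤ k from hb)
      · intro b hb b' hb' hne
        simp only [Finset.coe_range, Set.mem_Iio, Nat.lt_succ_iff] at hb hb'
        have hbn : b < n := lt_of_le_of_lt hb k.isLt
        have hbn' : b' < n := lt_of_le_of_lt hb' k.isLt
        have hAb : A' i b = Spr.A i (g ⟨b, hbn⟩) := by simp only [hA', dif_pos hbn]
        have hAb' : A' i b' = Spr.A i (g ⟨b', hbn'⟩) := by simp only [hA', dif_pos hbn']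
        have hgne : g ⟨b, hbn⟩ ≠ g ⟨b', hbn'⟩ := by
          intro h
          exact hne (by simpa using congrArg Fin.val (hginj h))
        show Disjoint (A' i b) (A' i b')
        rw [hAb, hAb']
        exact Spr.disjoint_jobs i _ _ hgne
    calc ∑ i : Fin m, ∑ k' ∈ Finset.range ((k : ℕ) + 1), (volume (A' i k')).toReal
        ≤ ∑ _i : Fin m, d (g k) := Finset.sum_le_sum fun i _ => hbound i
      _ = m * d (g k) := by simp [mul_comm]
  -- the schedule
  set L : ℕ → Fin m → ℝ := loads hm' p with hL
  set pr : ι → Fin m := fun j => amin hm' (L ((E j : ℕ))) with hpr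
  set st : ι → ℝ := fun j => L ((E j : ℕ)) (pr j) with hst
  have hst_nonneg : ∀ j, 0 ≤ st j := fun j => loads_nonneg hp0 _ _
  have horder : ∀ j j' : ι, ((E j : ℕ) < (E j' : ℕ)) → pr j = pr j' →
      st j + p ((E j : ℕ)) ≤ st j' := by
    intro j j' hlt hpp
    calc st j + p ((E j : ℕ)) = L ((E j : ℕ) + 1) (pr j) := (loads_succ_self _).symm
      _ ≤ L ((E j' : ℕ)) (pr j) := loads_mono hp0 (Nat.succ_le_of_lt hlt) _
      _ = st j' := by rw [hpp]
  refine ⟨⟨pr, st, fun j => p ((E j : ℕ)), fun j => hppos (E j), hst_nonneg, ?_, ?_⟩, ?_⟩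
  · -- end_le
    intro j
    set k : Fin n := E j with hk
    have hgk : g k = j := hgE j
    have h1 : (m : ℝ) * st j ≤ ∑ k' ∈ Finset.range (k : ℕ), p k' := by
      rw [← sum_loads (hm := hm') (p := p) (k := (k : ℕ))]
      have h := Finset.card_nsmul_le_sum Finset.univ (L ((k : ℕ))) (st j)
        (fun i _ => amin_le hm' (L ((k : ℕ))) i)
      simpa [nsmul_eq_mul] using h
    have hsum : ∑ k' ∈ Finset.range (k : ℕ), p k'
        = (∑ k' ∈ Finset.range (k : ℕ), tval k') / c := by
      rw [Finset.sum_div]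
    have h2 := hkey k
    rw [Finset.sum_range_succ, hgk] at h2
    have h4 : tval (k : ℕ) ≤ d j := hgk ▸ htled k
    have h3 : ∑ k' ∈ Finset.range (k : ℕ), tval k' ≤ m * d j - tval (k : ℕ) := by linarith
    have h6 : (m : ℝ) * st j * c ≤ (m : ℝ) * d j - tval (k : ℕ) := by
      rw [← le_div_iff₀ hc0]
      calc (m : ℝ) * st j ≤ ∑ k' ∈ Finset.range (k : ℕ), p k' := h1
        _ = (∑ k' ∈ Finset.range (k : ℕ), tval k') / c := hsum
        _ ≤ ((m : ℝ) * d j - tval (k : ℕ)) / c := by gcongr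
    show st j + p ((k : ℕ)) ≤ d j
    have hcm : c * (m : ℝ) = 2 * (m : ℝ) - 1 := by
      rw [hc]; field_simp
    have key2 : (2 * (m : ℝ) - 1) * st j + (m : ℝ) * tval (k : ℕ)
        ≤ (2 * (m : ℝ) - 1) * d j := by
      have hmul : ((m : ℝ) - 1) * tval (k : ℕ) ≤ ((m : ℝ) - 1) * d j :=
        mul_le_mul_of_nonneg_left h4 (by linarith)
      have h6' : (2 * (m : ℝ) - 1) * st j ≤ (m : ℝ) * d j - tval (k : ℕ) := by
        calc (2 * (m : ℝ) - 1) * st j = (m : ℝ) * st j * c := by rw [← hcm]; ring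
          _ ≤ _ := h6
      linarith
    have hfin : (st j + p ((k : ℕ))) * (c * m) ≤ d j * (c * m) := by
      have e1 : (st j + p ((k : ℕ))) * (c * m)
          = c * (m : ℝ) * st j + (m : ℝ) * tval (k : ℕ) := by
        rw [show p ((k : ℕ)) = tval ((k : ℕ)) / c from rfl]
        field_simp
      rw [e1]
      calc c * (m : ℝ) * st j + (m : ℝ) * tval (k : ℕ)
          = (2 * (m : ℝ) - 1) * st j + (m : ℝ) * tval (k : ℕ) := by rw [hcm]
        _ ≤ (2 * (m : ℝ) - 1) * d j := key2
        _ = d j * (c * m) := by rw [hcm]; ring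
    exact le_of_mul_le_mul_right hfin (by positivity)
  · -- disjoint
    intro j j' hne hpp
    have hEne : E j ≠ E j' := fun h => hne (E.injective h)
    have key : ∀ a b : ι, (E a : ℕ) < (E b : ℕ) → pr a = pr b →
        Disjoint (Set.Ioo (st a) (st a + p ((E a : ℕ))))
          (Set.Ioo (st b) (st b + p ((E b : ℕ)))) := by
      intro a b hlt hpp'
      have h := horder a b hlt hpp'
      rw [Set.disjoint_left]
      intro x hx hx'
      simp only [Set.mem_Ioo] at hx hx'
      linarith [hx.2, hx'.1]
    rcases lt_or_gt_of_ne hEne with h | h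
    · exact key j j' h hpp
    · exact (key j' j h hpp.symm).symm
  · -- energy
    have hlen : ∀ j, w j / p ((E j : ℕ)) = c * Spr.speed j := by
      intro j
      have hsp := Spr.speed_pos j
      have h1 : tval ((E j : ℕ)) = w j / Spr.speed j := by
        have h := htvw (E j); rw [hgE] at h
        rw [eq_div_iff hsp.ne']; linear_combination h
      have hwj := (hw j).ne'
      rw [show p ((E j : ℕ)) = tval ((E j : ℕ)) / c from rfl, h1]
      field_simp
    show ∑ j, w j * (w j / p ((E j : ℕ))) ^ (α - 1) ≤ c ^ (α - 1) * pEnergy α Spr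
    rw [pEnergy, Finset.mul_sum]
    apply le_of_eq
    apply Finset.sum_congr rfl
    intro j _
    rw [hlen j, Real.mul_rpow hc0.le (Spr.speed_pos j).le]
    ring
end

section
/- Fix a real α > 1 and an integer m ≥ 1. Suppose all jobs have a common deadline d (d_j = d for every job j), with arbitrary release dates r_j < d. Then for every feasible preemptive schedule S_pr on m processors there exists a feasible non-preemptive schedule S_npr on m processors with E(S_npr) ≤ (2 − 1/m)^(α−1) · E(S_pr). In particular this yields a (2 − 1/m)^(α−1)-approximation for the problem S|r_j, d_j=d|E. -/
/-!
Let `T j` be the total time job `j` runs in the preemptive schedule and `c = 2 - 1/m`. Run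
every job non-preemptively at `c` times its preemptive speed, i.e. for time `T j / c`; the energy
is then exactly `c ^ (α - 1)` times the preemptive one. The jobs are placed backwards from `D` in
order of non-increasing release date, each ending at the latest time up to which some processor
is still idle. When job `j` is placed, all jobs placed so far (and `j` itself) are released no
earlier than `r j`, so by volume they have total length at most `m (D - r j) / c`, while
`T j ≤ D - r j`. As in Graham's list scheduling bound, the chosen end time is at least `D` minus
the average load, so `j` starts no earlier than `D - (m + (m - 1)) (D - r j) / (c m) = r j`.
-/

open MeasureTheory Set

theorem MeasureTheory.sum_measureReal_le_of_pairwiseDisjoint {α κ : Type*} [MeasurableSpace α]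
    {μ : Measure α} {s : Finset κ} {B : κ → Set α} {t : Set α} (ht : μ t ≠ ⊤)
    (hd : (s : Set κ).PairwiseDisjoint B) (hB : ∀ k ∈ s, MeasurableSet (B k))
    (hBt : ∀ k ∈ s, B k ⊆ t) :
    ∑ k ∈ s, μ.real (B k) ≤ μ.real t := by
  rw [← measureReal_biUnion_finset hd hB fun k hk => measure_ne_top_of_subset (hBt k hk) ht]
  exact measureReal_mono (iUnion₂_subset hBt) ht

theorem exists_equiv_fin_antitone {ι α : Type*} [Fintype ι] [LinearOrder α] (f : ι → α) :
    ∃ e : Fin (Fintype.card ι) ≃ ι, Antitone (f ∘ e) := by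
  let e₀ := (Fintype.equivFin ι).symm
  let g : Fin (Fintype.card ι) → αᵒᵈ := fun k => OrderDual.toDual (f (e₀ k))
  exact ⟨(Tuple.sort g).trans e₀, fun _ _ hab => Tuple.monotone_sort g hab⟩

namespace PreemptiveSchedule

variable {ι : Type} [Fintype ι] {m : ℕ} {w r d : ι → ℝ} (S : PreemptiveSchedule ι m w r d)

noncomputable def procTime (j : ι) : ℝ := ∑ i, volume.real (S.A i j)

theorem procTime_eq_div (j : ι) : S.procTime j = w j / S.speed j := by
  rw [eq_div_iff (S.speed_pos j).ne', mul_comm]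
  exact S.work_done j

theorem procTime_pos {j : ι} (hw : 0 < w j) : 0 < S.procTime j := by
  rw [procTime_eq_div]
  exact div_pos hw (S.speed_pos j)

theorem procTime_le_sub {j : ι} (h : r j ≤ d j) : S.procTime j ≤ d j - r j := by
  rw [← Real.volume_real_Icc_of_le h]
  exact sum_measureReal_le_of_pairwiseDisjoint measure_Icc_lt_top.ne
    (fun i _ i' _ => S.disjoint_procs j i i') (fun i _ => S.measurableSet_A i j)
    (fun i _ => S.A_subset i j)

/-- Volume argument: in `[a, b]` each of the `m` processors offers `b - a` units of time. -/
theorem sum_procTime_le {s : Finset ι} {a b : ℝ} (hab : a ≤ b)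
    (hs : ∀ j ∈ s, a ≤ r j ∧ d j ≤ b) :
    ∑ j ∈ s, S.procTime j ≤ m * (b - a) := by
  have h_proc (i : Fin m) : ∑ j ∈ s, volume.real (S.A i j) ≤ b - a := by
    rw [← Real.volume_real_Icc_of_le hab]
    exact sum_measureReal_le_of_pairwiseDisjoint measure_Icc_lt_top.ne
      (fun j _ j' _ => S.disjoint_jobs i j j') (fun j _ => S.measurableSet_A i j)
      (fun j hj => (S.A_subset i j).trans (Icc_subset_Icc (hs j hj).1 (hs j hj).2))
  calc ∑ j ∈ s, S.procTime j = ∑ i, ∑ j ∈ s, volume.real (S.A i j) := Finset.sum_comm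
    _ ≤ ∑ _i : Fin m, (b - a) := Finset.sum_le_sum fun i _ => h_proc i
    _ = m * (b - a) := by simp [mul_sub]

end PreemptiveSchedule

theorem npEnergy_eq_mul_pEnergy {ι : Type} [Fintype ι] {m : ℕ} {w r d : ι → ℝ} {c : ℝ}
    (α : ℝ) (hc : 0 ≤ c) (S : NPSchedule ι m w r d) (P : PreemptiveSchedule ι m w r d)
    (h : ∀ j, w j / S.len j = c * P.speed j) :
    npEnergy α S = c ^ (α - 1) * pEnergy α P := by
  simp only [npEnergy, pEnergy, h, Real.mul_rpow hc (P.speed_pos _).le, Finset.mul_sum]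
  exact Finset.sum_congr rfl fun j _ => by ring

namespace BackwardListScheduling

variable {m : ℕ} [NeZero m]

noncomputable def latestProc (f : Fin m → ℝ) : Fin m := (Finite.exists_max f).choose

theorem le_latestProc (f : Fin m → ℝ) (i : Fin m) : f i ≤ f (latestProc f) :=
  (Finite.exists_max f).choose_spec i

variable (m) (D : ℝ) (L : ℕ → ℝ)

noncomputable def front : ℕ → Fin m → ℝ
  | 0 => fun _ => D
  | k + 1 =>
    Function.update (front k) (latestProc (front k)) (front k (latestProc (front k)) - L k)

noncomputable def proc (k : ℕ) : Fin m := latestProc (front m D L k)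

noncomputable def finish (k : ℕ) : ℝ := front m D L k (proc m D L k)

noncomputable def start (k : ℕ) : ℝ := finish m D L k - L k

theorem front_succ (k : ℕ) :
    front m D L (k + 1) = Function.update (front m D L k) (proc m D L k) (start m D L k) := rfl

variable {L}

theorem front_antitone (hL : ∀ k, 0 ≤ L k) (i : Fin m) : Antitone (front m D L · i) := by
  refine antitone_nat_of_succ_le fun k => ?_
  rw [front_succ]
  rcases eq_or_ne i (proc m D L k) with rfl | hi
  · simpa [start, finish] using hL k
  · rw [Function.update_of_ne hi]

theorem finish_le (hL : ∀ k, 0 ≤ L k) (k : ℕ) : finish m D L k ≤ D :=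
  front_antitone m D hL _ (Nat.zero_le k)

theorem sum_sub_front (k : ℕ) :
    ∑ i, (D - front m D L k i) = ∑ k' ∈ Finset.range k, L k' := by
  induction k with
  | zero => simp [front]
  | succ k ih =>
    have h_step (i : Fin m) : D - front m D L (k + 1) i
        = (D - front m D L k i) + if i = proc m D L k then L k else 0 := by
      rw [front_succ]
      rcases eq_or_ne i (proc m D L k) with rfl | hi
      · simp only [Function.update_self, if_true, start, finish]
        ring
      · simp [hi]
    simp only [h_step, Finset.sum_add_distrib, ih, Finset.sum_ite_eq', Finset.mem_univ,
      if_true, Finset.sum_range_succ]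

/-- The latest front is at least the average front. -/
theorem mul_sub_finish_le (k : ℕ) :
    m * (D - finish m D L k) ≤ ∑ k' ∈ Finset.range k, L k' := by
  rw [← sum_sub_front m]
  calc (m : ℝ) * (D - finish m D L k) = ∑ _i : Fin m, (D - finish m D L k) := by simp [mul_sub]
    _ ≤ ∑ i, (D - front m D L k i) :=
      Finset.sum_le_sum fun i _ => sub_le_sub_left (le_latestProc (front m D L k) i) D

theorem mul_sub_start_le (k : ℕ) :
    m * (D - start m D L k) ≤ ∑ k' ∈ Finset.range (k + 1), L k' + (m - 1) * L k := by
  have := mul_sub_finish_le m D (L := L) k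
  rw [Finset.sum_range_succ, start]
  linarith

theorem finish_le_start_of_lt (hL : ∀ k, 0 ≤ L k) {k k' : ℕ} (hkk' : k < k')
    (h : proc m D L k = proc m D L k') : finish m D L k' ≤ start m D L k := by
  have h_front : front m D L (k + 1) (proc m D L k) = start m D L k := by
    simp [front_succ]
  rw [finish, ← h, ← h_front]
  exact front_antitone m D hL _ hkk'

theorem disjoint_Ioo (hL : ∀ k, 0 ≤ L k) {k k' : ℕ} (hkk' : k ≠ k')
    (h : proc m D L k = proc m D L k') :
    Disjoint (Ioo (start m D L k) (finish m D L k)) (Ioo (start m D L k') (finish m D L k')) := by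
  rcases hkk'.lt_or_gt with hlt | hlt
  · exact ((Ioc_disjoint_Ioc_of_le (finish_le_start_of_lt m D hL hlt h)).mono
      Ioo_subset_Ioc_self Ioo_subset_Ioc_self).symm
  · exact (Ioc_disjoint_Ioc_of_le (finish_le_start_of_lt m D hL hlt h.symm)).mono
      Ioo_subset_Ioc_self Ioo_subset_Ioc_self

end BackwardListScheduling

theorem two_sub_one_div_natCast_pos (m : ℕ) : (0 : ℝ) < 2 - 1 / m := by
  have := Nat.cast_inv_le_one (α := ℝ) m
  rw [one_div]
  linarith

section SeqAlong

variable {ι : Type*} {n : ℕ} (e : Fin n ≃ ι) (ℓ : ι → ℝ)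

noncomputable def seqAlong (k : ℕ) : ℝ := if h : k < n then ℓ (e ⟨k, h⟩) else 0

theorem seqAlong_symm_apply (j : ι) : seqAlong e ℓ (e.symm j) = ℓ j := by
  simp [seqAlong]

theorem seqAlong_nonneg {ℓ : ι → ℝ} (hℓ : ∀ j, 0 ≤ ℓ j) (k : ℕ) : 0 ≤ seqAlong e ℓ k := by
  unfold seqAlong
  split_ifs
  exacts [hℓ _, le_rfl]

theorem sum_range_seqAlong (k : Fin n) :
    ∑ k' ∈ Finset.range (k + 1), seqAlong e ℓ k' = ∑ i ∈ Finset.Iic k, ℓ (e i) := by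
  rw [Nat.range_succ_eq_Iic, ← Fin.map_valEmbedding_Iic, Finset.sum_map]
  exact Finset.sum_congr rfl fun i _ => by simp [seqAlong]

end SeqAlong

open BackwardListScheduling in
theorem PreemptiveSchedule.release_le_start {ι : Type} [Fintype ι] {m : ℕ} [NeZero m]
    {w r : ι → ℝ} {D : ℝ} (S : PreemptiveSchedule ι m w r (fun _ => D)) (hrD : ∀ j, r j < D)
    {e : Fin (Fintype.card ι) ≃ ι} (he : Antitone (r ∘ e)) (k : Fin (Fintype.card ι)) :
    r (e k) ≤ start m D (seqAlong e fun j => S.procTime j / (2 - 1 / m)) k := by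
  set c : ℝ := 2 - 1 / m
  set X := D - r (e k)
  have hm : (1 : ℝ) ≤ m := Nat.one_le_cast.mpr NeZero.one_le
  have hc : 0 < c := two_sub_one_div_natCast_pos m
  have h_prefix : ∑ i ∈ Finset.Iic k, S.procTime (e i) ≤ m * X := by
    refine (Finset.sum_map (Finset.Iic k) e.toEmbedding S.procTime).symm.trans_le ?_
    refine S.sum_procTime_le (hrD _).le fun j hj => ⟨?_, le_rfl⟩
    obtain ⟨i, hi, rfl⟩ := Finset.mem_map.mp hj
    exact he (Finset.mem_Iic.mp hi)
  have h_last : S.procTime (e k) ≤ X := S.procTime_le_sub (hrD _).le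
  have h_start := mul_sub_start_le m D (L := seqAlong e fun j => S.procTime j / c) k
  rw [sum_range_seqAlong, ← Finset.sum_div] at h_start
  have h_len : seqAlong e (fun j => S.procTime j / c) k = S.procTime (e k) / c := by
    simpa using seqAlong_symm_apply e (fun j => S.procTime j / c) (e k)
  -- `c = 2 - 1/m` is exactly what makes `m X + (m - 1) X = c m X`.
  have h_bound : (m : ℝ) * (D - start m D (seqAlong e fun j => S.procTime j / c) k) ≤ m * X :=
    calc _ ≤ (∑ i ∈ Finset.Iic k, S.procTime (e i)) / c + (m - 1) * (S.procTime (e k) / c) := by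
          rwa [h_len] at h_start
      _ ≤ (m * X) / c + (m - 1) * (X / c) := by gcongr
      _ = m * X := by field_simp; simp only [c]; field_simp; ring
  linarith [le_of_mul_le_mul_left h_bound (by linarith)]

open BackwardListScheduling in
theorem PreemptiveSchedule.exists_npSchedule_len_eq {ι : Type} [Fintype ι] {m : ℕ} [NeZero m]
    {w r : ι → ℝ} {D : ℝ} (S : PreemptiveSchedule ι m w r (fun _ => D)) (hw : ∀ j, 0 < w j)
    (hrD : ∀ j, r j < D) :
    ∃ S' : NPSchedule ι m w r (fun _ => D), ∀ j, S'.len j = S.procTime j / (2 - 1 / m) := by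
  obtain ⟨e, he⟩ := exists_equiv_fin_antitone r
  set ℓ : ι → ℝ := fun j => S.procTime j / (2 - 1 / m)
  have hℓ (j : ι) : 0 < ℓ j := div_pos (S.procTime_pos (hw j)) (two_sub_one_div_natCast_pos m)
  have hL := seqAlong_nonneg e fun j => (hℓ j).le
  refine ⟨{ proc := fun j => proc m D (seqAlong e ℓ) (e.symm j)
            start := fun j => start m D (seqAlong e ℓ) (e.symm j)
            len := fun j => seqAlong e ℓ (e.symm j)
            len_pos := fun j => by simpa [seqAlong_symm_apply] using hℓ j
            start_ge := fun j => by
              simpa only [e.apply_symm_apply] using S.release_le_start hrD he (e.symm j)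
            end_le := fun j => by simpa [start] using finish_le m D hL _
            disjoint_jobs := fun j j' hjj' h => ?_ }, seqAlong_symm_apply e ℓ⟩
  simp only [start, sub_add_cancel]
  exact disjoint_Ioo m D hL (by simpa [Fin.val_inj] using hjj') h

theorem common_deadline_general (ι : Type) [Fintype ι] (α : ℝ)
    (m : ℕ) (hm : 1 ≤ m) (w r : ι → ℝ) (D : ℝ)
    (hw : ∀ j, 0 < w j) (hrD : ∀ j, r j < D)
    (Spr : PreemptiveSchedule ι m w r (fun _ => D)) :
    ∃ Snpr : NPSchedule ι m w r (fun _ => D),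
      npEnergy α Snpr ≤ (2 - 1 / (m : ℝ)) ^ (α - 1) * pEnergy α Spr := by
  have : NeZero m := ⟨by omega⟩
  obtain ⟨S, hS⟩ := Spr.exists_npSchedule_len_eq hw hrD
  refine ⟨S, (npEnergy_eq_mul_pEnergy α (two_sub_one_div_natCast_pos m).le S Spr fun j => ?_).le⟩
  rw [hS, Spr.procTime_eq_div]
  field_simp [(hw j).ne', (Spr.speed_pos j).ne']

/-- Theorem 2 (common deadline): for `α > 1` and `m ≥ 1` processors, if all jobs have
the same deadline `D` (and arbitrary release dates `0 ≤ r j < D`), then for every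
feasible preemptive schedule there exists a feasible non-preemptive schedule whose
energy is at most `(2 - 1/m)^(α-1)` times the energy of the preemptive schedule.
This yields a `(2 - 1/m)^(α-1)`-approximation for `S|r_j, d_j=d|E`. -/
theorem common_deadline (ι : Type) [Fintype ι] (α : ℝ) (hα : 1 < α)
    (m : ℕ) (hm : 1 ≤ m) (w r : ι → ℝ) (D : ℝ)
    (hw : ∀ j, 0 < w j) (hr : ∀ j, 0 ≤ r j) (hrD : ∀ j, r j < D)
    (Spr : PreemptiveSchedule ι m w r (fun _ => D)) :
    ∃ Snpr : NPSchedule ι m w r (fun _ => D),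
      npEnergy α Snpr ≤ (2 - 1 / (m : ℝ)) ^ (α - 1) * pEnergy α Spr :=
  common_deadline_general ι α m hm w r D hw hrD Spr
end

section
/- Fix a real α > 1 and an integer m ≥ 1. Let the instance be a clique instance with T = min_j d_j, and let S_pr be a feasible preemptive schedule on m processors. For each job j let e_{ℓj} (resp. e_{rj}) be the total Lebesgue measure of the times at which j is executed before (resp. after) T in S_pr, and let L = { j : e_{ℓj} ≥ e_{rj} } and R = { j : e_{ℓj} < e_{rj} }. Then there exists a feasible preemptive schedule S on m processors in which every job of L is executed entirely within [r_j, T], every job of R is executed entirely within [T, d_j], and E(S) = 2^(α−1) · E(S_pr) (obtained by doubling every job's speed and executing each job only in a suitable subset of its original execution times). -/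
open MeasureTheory Set

/-!
Cut every job `j` at a time `c_j` at which exactly half of its execution time in `S_pr`
has elapsed, keep the half lying on the side of `T` where `j` did at least half of its
work, and double its speed. The elapsed execution time is a `1`-Lipschitz function of the
cut time, so `c_j` exists by the intermediate value theorem, in `[r_j, T]` or in
`[T, d_j]` since `r_j ≤ T ≤ d_j`. Shrinking execution sets keeps the schedule feasible,
and doubling every speed multiplies the energy by `2^(α-1)`.
-/

lemma lipschitzWith_measureReal_inter_Iio {B : Set ℝ} (hB : volume B ≠ ⊤) :
    LipschitzWith 1 fun t => volume.real (B ∩ Iio t) := by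
  refine LipschitzWith.of_le_add fun s t => ?_
  have hsub : B ∩ Iio s ⊆ (B ∩ Iio t) ∪ Ico t s := fun x ⟨hxB, hxs⟩ =>
    (lt_or_ge x t).imp (fun hxt => ⟨hxB, hxt⟩) fun htx => ⟨htx, hxs⟩
  calc volume.real (B ∩ Iio s) ≤ volume.real (B ∩ Iio t ∪ Ico t s) :=
        measureReal_mono hsub
          (measure_union_ne_top (measure_ne_top_of_subset inter_subset_left hB) (by simp))
    _ ≤ volume.real (B ∩ Iio t) + volume.real (Ico t s) := measureReal_union_le _ _
    _ ≤ volume.real (B ∩ Iio t) + dist s t := by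
        rw [Real.volume_real_Ico, Real.dist_eq]
        gcongr
        exact max_le (le_abs_self _) (abs_nonneg _)

lemma measureReal_inter_Iio_add_measureReal_inter_Ioi {B : Set ℝ} (hB : volume B ≠ ⊤)
    (t : ℝ) : volume.real (B ∩ Iio t) + volume.real (B ∩ Ioi t) = volume.real B := by
  rw [measureReal_congr ((ae_eq_refl B).inter Ioi_ae_eq_Ici), ← compl_Iio, ← sdiff_eq,
    measureReal_inter_add_sdiff measurableSet_Iio hB]

section CumulativeVolume

variable {κ : Type*} [Fintype κ] {B : κ → Set ℝ} {a b : ℝ}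

lemma sum_measureReal_inter_Iio_add_sum_measureReal_inter_Ioi (hB : ∀ i, volume (B i) ≠ ⊤)
    (t : ℝ) :
    ∑ i, volume.real (B i ∩ Iio t) + ∑ i, volume.real (B i ∩ Ioi t) =
      ∑ i, volume.real (B i) := by
  rw [← Finset.sum_add_distrib]
  exact Finset.sum_congr rfl fun i _ => measureReal_inter_Iio_add_measureReal_inter_Ioi (hB i) t

lemma continuous_sum_measureReal_inter_Iio (hB : ∀ i, volume (B i) ≠ ⊤) :
    Continuous fun t => ∑ i, volume.real (B i ∩ Iio t) :=
  continuous_finsetSum _ fun i _ => (lipschitzWith_measureReal_inter_Iio (hB i)).continuous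

lemma exists_two_mul_sum_measureReal_inter_Iio_eq (hB : ∀ i, B i ⊆ Icc a b) {T : ℝ}
    (haT : a ≤ T)
    (hRL : ∑ i, volume.real (B i ∩ Ioi T) ≤ ∑ i, volume.real (B i ∩ Iio T)) :
    ∃ c ∈ Icc a T, 2 * ∑ i, volume.real (B i ∩ Iio c) = ∑ i, volume.real (B i) := by
  have hfin i : volume (B i) ≠ ⊤ := measure_ne_top_of_subset (hB i) measure_Icc_lt_top.ne
  have hsplit := sum_measureReal_inter_Iio_add_sum_measureReal_inter_Ioi hfin T
  have hzero : ∑ i, volume.real (B i ∩ Iio a) = 0 := Finset.sum_eq_zero fun i _ => by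
    rw [show B i ∩ Iio a = ∅ from subset_empty_iff.1 fun x hx => not_le.2 hx.2 (hB i hx.1).1,
      measureReal_empty]
  have hnonneg : 0 ≤ ∑ i, volume.real (B i) := by positivity
  obtain ⟨c, hc, hhalf⟩ := intermediate_value_Icc haT
    (continuous_sum_measureReal_inter_Iio hfin).continuousOn
    (show (∑ i, volume.real (B i)) / 2 ∈ _ from ⟨by linarith, by linarith⟩)
  exact ⟨c, hc, by linarith⟩

lemma exists_two_mul_sum_measureReal_inter_Ioi_eq (hB : ∀ i, B i ⊆ Icc a b) {T : ℝ}
    (hTb : T ≤ b)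
    (hLR : ∑ i, volume.real (B i ∩ Iio T) ≤ ∑ i, volume.real (B i ∩ Ioi T)) :
    ∃ c ∈ Icc T b, 2 * ∑ i, volume.real (B i ∩ Ioi c) = ∑ i, volume.real (B i) := by
  have hfin i : volume (B i) ≠ ⊤ := measure_ne_top_of_subset (hB i) measure_Icc_lt_top.ne
  have hsplit := sum_measureReal_inter_Iio_add_sum_measureReal_inter_Ioi hfin
  have hzero : ∑ i, volume.real (B i ∩ Ioi b) = 0 := Finset.sum_eq_zero fun i _ => by
    rw [show B i ∩ Ioi b = ∅ from subset_empty_iff.1 fun x hx => not_le.2 hx.2 (hB i hx.1).2,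
      measureReal_empty]
  have hnonneg : 0 ≤ ∑ i, volume.real (B i) := by positivity
  obtain ⟨c, hc, hhalf⟩ := intermediate_value_Icc hTb
    (continuous_sum_measureReal_inter_Iio hfin).continuousOn
    (show (∑ i, volume.real (B i)) / 2 ∈ _ from
      ⟨by linarith [hsplit T], by linarith [hsplit b]⟩)
  exact ⟨c, hc, by linarith [hsplit c]⟩

end CumulativeVolume

namespace PreemptiveSchedule

variable {ι : Type} [Fintype ι] {m : ℕ} {w r d : ι → ℝ}

def restrictDoubleSpeed (S : PreemptiveSchedule ι m w r d) (C : ι → Set ℝ)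
    (hC : ∀ j, MeasurableSet (C j))
    (hhalf : ∀ j, 2 * ∑ i, volume.real (S.A i j ∩ C j) = ∑ i, volume.real (S.A i j)) :
    PreemptiveSchedule ι m w r d where
  speed j := 2 * S.speed j
  A i j := S.A i j ∩ C j
  speed_pos j := mul_pos two_pos (S.speed_pos j)
  measurableSet_A i j := (S.measurableSet_A i j).inter (hC j)
  A_subset i j := inter_subset_left.trans (S.A_subset i j)
  disjoint_jobs i j j' h := (S.disjoint_jobs i j j' h).mono inter_subset_left inter_subset_left
  disjoint_procs j i i' h := (S.disjoint_procs j i i' h).mono inter_subset_left inter_subset_left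
  work_done j := by
    rw [← S.work_done j]
    simp only [← measureReal_def, ← hhalf j]
    ring

lemma pEnergy_restrictDoubleSpeed (α : ℝ) (S : PreemptiveSchedule ι m w r d)
    (C : ι → Set ℝ) (hC : ∀ j, MeasurableSet (C j))
    (hhalf : ∀ j, 2 * ∑ i, volume.real (S.A i j ∩ C j) = ∑ i, volume.real (S.A i j)) :
    pEnergy α (S.restrictDoubleSpeed C hC hhalf) = 2 ^ (α - 1) * pEnergy α S := by
  simp only [pEnergy, restrictDoubleSpeed, Finset.mul_sum]
  refine Finset.sum_congr rfl fun j _ => ?_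
  rw [Real.mul_rpow zero_le_two (S.speed_pos j).le]
  ring

end PreemptiveSchedule

theorem clique_split_at_T_general (ι : Type) [Fintype ι] (α : ℝ)
    (m : ℕ) (w r d : ι → ℝ)
    (T : ℝ) (hT : T = ⨅ j, d j) (hclique : ∀ j, r j ≤ T)
    (Spr : PreemptiveSchedule ι m w r d)
    (eL eR : ι → ℝ)
    (heL : ∀ j, eL j = ∑ i, (volume (Spr.A i j ∩ Iio T)).toReal)
    (heR : ∀ j, eR j = ∑ i, (volume (Spr.A i j ∩ Ioi T)).toReal) :
    ∃ S : PreemptiveSchedule ι m w r d,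
      (∀ j, eR j ≤ eL j → ∀ i, S.A i j ⊆ Icc (r j) T) ∧
      (∀ j, eL j < eR j → ∀ i, S.A i j ⊆ Icc T (d j)) ∧
      pEnergy α S = 2 ^ (α - 1) * pEnergy α Spr := by
  have hTd : ∀ j, T ≤ d j := fun j => hT ▸ ciInf_le (finite_range d).bddBelow j
  simp only [← measureReal_def] at heL heR
  have hcut : ∀ j, ∃ C : Set ℝ, MeasurableSet C ∧
      2 * ∑ i, volume.real (Spr.A i j ∩ C) = ∑ i, volume.real (Spr.A i j) ∧
      (eR j ≤ eL j → ∀ i, Spr.A i j ∩ C ⊆ Icc (r j) T) ∧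
      (eL j < eR j → ∀ i, Spr.A i j ∩ C ⊆ Icc T (d j)) := by
    intro j
    rcases le_or_gt (eR j) (eL j) with hRL | hLR
    · obtain ⟨c, hc, hhalf⟩ := exists_two_mul_sum_measureReal_inter_Iio_eq
        (Spr.A_subset · j) (hclique j) (by rwa [← heL, ← heR])
      exact ⟨Iio c, measurableSet_Iio, hhalf,
        fun _ i x hx => ⟨(Spr.A_subset i j hx.1).1, hx.2.le.trans hc.2⟩,
        fun h => absurd hRL (not_le.2 h)⟩
    · obtain ⟨c, hc, hhalf⟩ := exists_two_mul_sum_measureReal_inter_Ioi_eq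
        (Spr.A_subset · j) (hTd j) (by rw [← heL, ← heR]; exact hLR.le)
      exact ⟨Ioi c, measurableSet_Ioi, hhalf, fun h => absurd h (not_le.2 hLR),
        fun _ i x hx => ⟨hc.1.trans hx.2.le, (Spr.A_subset i j hx.1).2⟩⟩
  choose C hC hhalf hCL hCR using hcut
  exact ⟨Spr.restrictDoubleSpeed C hC hhalf, hCL, hCR, Spr.pEnergy_restrictDoubleSpeed α C hC hhalf⟩

/-- Splitting a preemptive schedule of a clique instance at `T = min_j d_j`:
for each job `j` let `eL j` (resp. `eR j`) be the total measure of the times at which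
`j` executes before (resp. after) `T` in `Spr`. Then there is a feasible preemptive
schedule `S` in which every job of `L = {j : eL j ≥ eR j}` is executed entirely within
`[r j, T]`, every job of `R = {j : eL j < eR j}` is executed entirely within
`[T, d j]`, and `E(S) = 2^(α-1) · E(Spr)` (obtained by doubling every job's speed). -/
theorem clique_split_at_T (ι : Type) [Fintype ι] [Nonempty ι] (α : ℝ) (hα : 1 < α)
    (m : ℕ) (hm : 1 ≤ m) (w r d : ι → ℝ)
    (hw : ∀ j, 0 < w j) (hr : ∀ j, 0 ≤ r j) (hrd : ∀ j, r j < d j)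
    (T : ℝ) (hT : T = ⨅ j, d j) (hclique : ∀ j, r j ≤ T)
    (Spr : PreemptiveSchedule ι m w r d)
    (eL eR : ι → ℝ)
    (heL : ∀ j, eL j = ∑ i, (volume (Spr.A i j ∩ Iio T)).toReal)
    (heR : ∀ j, eR j = ∑ i, (volume (Spr.A i j ∩ Ioi T)).toReal) :
    ∃ S : PreemptiveSchedule ι m w r d,
      (∀ j, eR j ≤ eL j → ∀ i, S.A i j ⊆ Icc (r j) T) ∧
      (∀ j, eL j < eR j → ∀ i, S.A i j ⊆ Icc T (d j)) ∧
      pEnergy α S = 2 ^ (α - 1) * pEnergy α Spr :=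
  clique_split_at_T_general ι α m w r d T hT hclique Spr eL eR heL heR
end

section
/- Fix a real α > 1 and an integer m ≥ 1. Suppose the instance is a clique instance, i.e., there exists a time T with r_j ≤ T ≤ d_j for every job j. Then for every feasible preemptive schedule S_pr on m processors there exists a feasible non-preemptive schedule S_npr on m processors with E(S_npr) ≤ (2·(2 − 1/m))^(α−1) · E(S_pr). In particular this yields a (2(2 − 1/m))^(α−1)-approximation for the problem S|clique|E. -/
open MeasureTheory Set

/-!
Let `T` lie in every job's window and `L j = max (T - r j) (d j - T)`. Take the jobs in order
of increasing `L`. A job whose window reaches further to the left of `T` than to the right is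
stacked leftwards from `T`, otherwise rightwards; each side has `m` lanes, filled greedily
(least-loaded lane first), and job `j` gets length `t j / c`, where `t j` is its execution time
in the preemptive schedule and `c = 2(2 - 1/m)`. All jobs up to `j` run inside
`[T - L j, T + L j]` in the preemptive schedule, so their execution times add up to at most
`2 m L j`. The greedy choice puts `j` at an offset no larger than the average load, and with
`t j ≤ 2 L j` this keeps `j` within distance `L j` of `T`, hence inside its window. Every job
runs exactly `c` times faster than before, so the energy grows by exactly the factor `c^(α-1)`.
-/

theorem exists_linearOrder_monotone {ι β : Type*} [LinearOrder β] (f : ι → β) :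
    ∃ _ : LinearOrder ι, Monotone f := by
  let key : ι → β ×ₗ Ordinal := fun x => toLex (f x, Ordinal.typein WellOrderingRel x)
  have hkey : Function.Injective key := fun x y h =>
    (Ordinal.typein WellOrderingRel).injective (congrArg (fun z => (ofLex z).2) h)
  let _ : LinearOrder ι := LinearOrder.lift' key hkey
  exact ⟨_, fun x y hxy => Prod.Lex.monotone_fst _ _ hxy⟩

theorem sum_toReal_volume_le_of_subset_Icc {κ : Type*} (s : Finset κ) {B : κ → Set ℝ}
    {a b : ℝ} (hab : a ≤ b) (hB : ∀ j ∈ s, MeasurableSet (B j))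
    (hsub : ∀ j ∈ s, B j ⊆ Icc a b) (hdisj : (s : Set κ).PairwiseDisjoint B) :
    ∑ j ∈ s, (volume (B j)).toReal ≤ b - a := by
  have hfin : ∀ j ∈ s, volume (B j) ≠ ⊤ := fun j hj =>
    ((measure_mono (hsub j hj)).trans_lt measure_Icc_lt_top).ne
  calc ∑ j ∈ s, (volume (B j)).toReal = (volume (⋃ j ∈ s, B j)).toReal := by
        rw [measure_biUnion_finset hdisj hB, ENNReal.toReal_sum hfin]
    _ ≤ (volume (Icc a b)).toReal :=
        ENNReal.toReal_mono measure_Icc_lt_top.ne (measure_mono (iUnion₂_subset hsub))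
    _ = b - a := by rw [Real.volume_Icc, ENNReal.toReal_ofReal (sub_nonneg.2 hab)]

section ListScheduling

variable {α β : Type*} [LinearOrder α] [DecidableEq β]

-- The total length of the jobs of `s` put on lane `i` before `k`: if the jobs are placed in
-- increasing order, this is where `k` starts when it is put on lane `i`.
def laneLoad (s : Finset α) (p : α → ℝ) (lane : α → β) (k : α) (i : β) : ℝ :=
  ∑ j ∈ s with j < k ∧ lane j = i, p j

variable {s : Finset α} {p : α → ℝ} {lane : α → β}

theorem laneLoad_nonneg (hp : ∀ j ∈ s, 0 ≤ p j) (k : α) (i : β) : 0 ≤ laneLoad s p lane k i :=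
  Finset.sum_nonneg fun j hj => hp j (Finset.mem_of_mem_filter j hj)

theorem laneLoad_add_le (hp : ∀ j ∈ s, 0 ≤ p j) {k k' : α} (hk : k ∈ s) (hkk' : k < k')
    (hlane : lane k = lane k') :
    laneLoad s p lane k (lane k) + p k ≤ laneLoad s p lane k' (lane k') := by
  unfold laneLoad
  rw [add_comm, ← Finset.sum_insert (s := s.filter _) (by simp)]
  refine Finset.sum_le_sum_of_subset_of_nonneg ?_
    fun j hj _ => hp j (Finset.mem_of_mem_filter j hj)
  intro j hj
  simp only [Finset.mem_insert, Finset.mem_filter] at hj ⊢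
  rcases hj with rfl | ⟨hj, hjk, hlj⟩
  · exact ⟨hk, hkk', hlane⟩
  · exact ⟨hj, hjk.trans hkk', hlj.trans hlane⟩

theorem laneLoad_insert_update {a k : α} (has : ∀ j ∈ s, j < a) (hk : k ≤ a) (i₀ i : β) :
    laneLoad (insert a s) p (Function.update lane a i₀) k i = laneLoad s p lane k i := by
  unfold laneLoad
  rw [Finset.filter_insert, if_neg fun h => hk.not_gt h.1]
  refine Finset.sum_congr (Finset.filter_congr fun j hj => ?_) fun _ _ => rfl
  rw [Function.update_of_ne (has j hj).ne]

variable [Fintype β]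

theorem sum_laneLoad (k : α) : ∑ i, laneLoad s p lane k i = ∑ j ∈ s with j < k, p j := by
  simp only [laneLoad, ← Finset.filter_filter]
  exact Finset.sum_fiberwise _ lane p

theorem card_mul_laneLoad_le {k : α}
    (hmin : ∀ i, laneLoad s p lane k (lane k) ≤ laneLoad s p lane k i) :
    (Fintype.card β : ℝ) * laneLoad s p lane k (lane k) ≤ ∑ j ∈ s with j < k, p j := by
  rw [← sum_laneLoad (lane := lane), ← nsmul_eq_mul]
  exact Finset.card_nsmul_le_sum _ _ _ fun i _ => hmin i

theorem exists_lane_forall_laneLoad_le [Nonempty β] (s : Finset α) (p : α → ℝ) :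
    ∃ lane : α → β, ∀ k ∈ s, ∀ i, laneLoad s p lane k (lane k) ≤ laneLoad s p lane k i := by
  classical
  refine Finset.induction_on_max s ⟨Classical.arbitrary _, by simp⟩ ?_
  rintro a s has ⟨lane, hlane⟩
  obtain ⟨i₀, -, hi₀⟩ := Finset.univ.exists_min_image (laneLoad s p lane a) Finset.univ_nonempty
  refine ⟨Function.update lane a i₀, fun k hk i => ?_⟩
  rcases Finset.mem_insert.mp hk with rfl | hk
  · simp only [laneLoad_insert_update has le_rfl, Function.update_self]
    exact hi₀ i (Finset.mem_univ i)
  · have hka := has k hk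
    simp only [laneLoad_insert_update has hka.le, Function.update_of_ne hka.ne]
    exact hlane k hk i

end ListScheduling

namespace PreemptiveSchedule

variable {ι : Type} [Fintype ι] {m : ℕ} {w r d : ι → ℝ} (S : PreemptiveSchedule ι m w r d)

noncomputable def execTime (j : ι) : ℝ := ∑ i, (volume (S.A i j)).toReal

theorem speed_mul_execTime (j : ι) : S.speed j * S.execTime j = w j := S.work_done j

theorem execTime_pos {j : ι} (hw : 0 < w j) : 0 < S.execTime j :=
  pos_of_mul_pos_right ((S.speed_mul_execTime j).symm ▸ hw) (S.speed_pos j).le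

theorem execTime_le {j : ι} (h : r j ≤ d j) : S.execTime j ≤ d j - r j :=
  sum_toReal_volume_le_of_subset_Icc _ h (fun i _ => S.measurableSet_A i j)
    (fun i _ => S.A_subset i j) fun i _ i' _ => S.disjoint_procs j i i'

theorem sum_execTime_le (s : Finset ι) {a b : ℝ} (hab : a ≤ b)
    (hs : ∀ j ∈ s, Icc (r j) (d j) ⊆ Icc a b) : ∑ j ∈ s, S.execTime j ≤ m * (b - a) := by
  unfold execTime
  rw [Finset.sum_comm]
  calc ∑ i, ∑ j ∈ s, (volume (S.A i j)).toReal ≤ ∑ _i : Fin m, (b - a) :=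
        Finset.sum_le_sum fun i _ => sum_toReal_volume_le_of_subset_Icc s hab
          (fun j _ => S.measurableSet_A i j) (fun j hj => (S.A_subset i j).trans (hs j hj))
          fun j _ j' _ => S.disjoint_jobs i j j'
    _ = m * (b - a) := by simp [mul_sub]

end PreemptiveSchedule

noncomputable def speedFactor (m : ℕ) : ℝ := 2 * (2 - 1 / (m : ℝ))

theorem speedFactor_pos {m : ℕ} (hm : 1 ≤ m) : 0 < speedFactor m := by
  have : 1 / (m : ℝ) ≤ 1 := div_le_one_of_le₀ (by exact_mod_cast hm) (by positivity)
  unfold speedFactor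
  linarith

theorem add_div_speedFactor_le {m : ℕ} (hm : 1 ≤ m) {o t X L : ℝ} (hX : t + X ≤ m * (2 * L))
    (ho : m * o ≤ X / speedFactor m) (ht : t ≤ 2 * L) : o + t / speedFactor m ≤ L := by
  set c := speedFactor m
  have hc : 0 < c := speedFactor_pos hm
  have hm' : (1 : ℝ) ≤ m := by exact_mod_cast hm
  have hcm : c * m = 4 * m - 2 := by
    simp only [c, speedFactor]
    field_simp
    ring
  rw [le_div_iff₀ hc] at ho
  refine le_of_mul_le_mul_left ?_ (mul_pos hc (by linarith : (0 : ℝ) < m))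
  calc c * m * (o + t / c) = m * o * c + m * t := by field_simp
    _ ≤ m * (2 * L) + (m - 1) * (2 * L) := by nlinarith
    _ = c * m * L := by rw [hcm]; ring

theorem npEnergy_eq_of_len_eq {ι : Type} [Fintype ι] {m : ℕ} {w r d : ι → ℝ} (α : ℝ)
    {c : ℝ} (hc : 0 < c) (Spr : PreemptiveSchedule ι m w r d) (S : NPSchedule ι m w r d)
    (hS : ∀ j, S.len j = Spr.execTime j / c) :
    npEnergy α S = c ^ (α - 1) * pEnergy α Spr := by
  unfold npEnergy pEnergy
  rw [Finset.mul_sum]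
  refine Finset.sum_congr rfl fun j _ => ?_
  have ht : 0 < Spr.execTime j := by simpa [hS, hc] using S.len_pos j
  rw [hS, ← Spr.speed_mul_execTime j,
    show Spr.speed j * Spr.execTime j / (Spr.execTime j / c) = c * Spr.speed j by
      field_simp,
    Real.mul_rpow hc.le (Spr.speed_pos j).le]
  ring

def radius {ι : Type*} (T : ℝ) (r d : ι → ℝ) (j : ι) : ℝ := max (T - r j) (d j - T)

theorem Icc_subset_Icc_radius {ι : Type*} (T : ℝ) (r d : ι → ℝ) (j : ι) :
    Icc (r j) (d j) ⊆ Icc (T - radius T r d j) (T + radius T r d j) := by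
  unfold radius
  exact Icc_subset_Icc (by linarith [le_max_left (T - r j) (d j - T)])
    (by linarith [le_max_right (T - r j) (d j - T)])

section CliqueSchedule

variable {ι : Type} [Fintype ι] [LinearOrder ι] {m : ℕ} {w r d : ι → ℝ} {T : ℝ}

theorem laneLoad_add_le_radius (hm : 1 ≤ m) (hT : ∀ j, r j ≤ T ∧ T ≤ d j)
    (Spr : PreemptiveSchedule ι m w r d) (hmono : Monotone (radius T r d)) {s : Finset ι}
    {lane : ι → Fin m} {k : ι}
    (hmin : ∀ i, laneLoad s (Spr.execTime · / speedFactor m) lane k (lane k) ≤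
      laneLoad s (Spr.execTime · / speedFactor m) lane k i) :
    laneLoad s (Spr.execTime · / speedFactor m) lane k (lane k) +
      Spr.execTime k / speedFactor m ≤ radius T r d k := by
  set L := radius T r d k
  have hrL : T - r k ≤ L := le_max_left _ _
  have hdL : d k - T ≤ L := le_max_right _ _
  have hwindow : ∑ j ∈ insert k {j ∈ s | j < k}, Spr.execTime j ≤ m * (2 * L) := by
    refine (Spr.sum_execTime_le _ (a := T - L) (b := T + L) (by linarith [(hT k).1])
      fun j hj => ?_).trans_eq (by ring)
    have hjk : radius T r d j ≤ L := by
      refine hmono ?_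
      rcases Finset.mem_insert.mp hj with rfl | hj
      exacts [le_rfl, (Finset.mem_filter.mp hj).2.le]
    exact (Icc_subset_Icc_radius T r d j).trans (Icc_subset_Icc (by linarith) (by linarith))
  rw [Finset.sum_insert (by simp)] at hwindow
  have hgreedy := card_mul_laneLoad_le hmin
  rw [Fintype.card_fin, ← Finset.sum_div] at hgreedy
  have hself : Spr.execTime k ≤ 2 * L :=
    (Spr.execTime_le ((hT k).1.trans (hT k).2)).trans (by linarith)
  exact add_div_speedFactor_le hm hwindow hgreedy hself

theorem exists_npSchedule_len_eq (hT : ∀ j, r j ≤ T ∧ T ≤ d j) (left : ι → Bool)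
    (lane : ι → Fin m) (off p : ι → ℝ) (hp : ∀ j, 0 < p j) (hoff : ∀ j, 0 ≤ off j)
    (hstack : ∀ j k, j < k → left j = left k → lane j = lane k → off j + p j ≤ off k)
    (hleft : ∀ j, left j = true → off j + p j ≤ T - r j)
    (hright : ∀ j, left j = false → off j + p j ≤ d j - T) :
    ∃ S : NPSchedule ι m w r d, ∀ j, S.len j = p j := by
  let start j := if left j then T - off j - p j else T + off j
  have hdisj : ∀ j k, j < k → lane j = lane k →
      Disjoint (Ioo (start j) (start j + p j)) (Ioo (start k) (start k + p k)) := by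
    intro j k hjk hlane
    rw [Set.disjoint_left]
    rintro x ⟨hxj, hxj'⟩ ⟨hxk, hxk'⟩
    have := hoff j
    have := hoff k
    cases hj : left j <;> cases hk : left k <;>
      simp only [start, hj, hk, ↓reduceIte, Bool.false_eq_true] at hxj hxj' hxk hxk' <;>
      first
      | linarith
      | have := hstack j k hjk (hj.trans hk.symm) hlane; linarith
  refine ⟨⟨lane, start, p, hp, fun j => ?_, fun j => ?_, fun j k hne hlane => ?_⟩, fun _ => rfl⟩
  · cases hj : left j <;> simp only [start, hj, ↓reduceIte, Bool.false_eq_true]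
    · linarith [(hT j).1, hoff j]
    · linarith [hleft j hj]
  · cases hj : left j <;> simp only [start, hj, ↓reduceIte, Bool.false_eq_true]
    · linarith [hright j hj]
    · linarith [(hT j).2, hoff j]
  · rcases hne.lt_or_gt with h | h
    exacts [hdisj j k h hlane, (hdisj k j h hlane.symm).symm]

theorem exists_npSchedule_len_eq_execTime_div (hm : 1 ≤ m) (hw : ∀ j, 0 < w j)
    (hT : ∀ j, r j ≤ T ∧ T ≤ d j) (Spr : PreemptiveSchedule ι m w r d)
    (hmono : Monotone (radius T r d)) :
    ∃ S : NPSchedule ι m w r d, ∀ j, S.len j = Spr.execTime j / speedFactor m := by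
  set p := (Spr.execTime · / speedFactor m)
  have hp : ∀ j, 0 < p j := fun j => div_pos (Spr.execTime_pos (hw j)) (speedFactor_pos hm)
  let left j := decide (d j - T ≤ T - r j)
  let side b : Finset ι := {j | left j = b}
  have : Nonempty (Fin m) := ⟨⟨0, hm⟩⟩
  choose lane hlane using fun b => exists_lane_forall_laneLoad_le (β := Fin m) (side b) p
  have hbound j : laneLoad (side (left j)) p (lane (left j)) j (lane (left j) j) + p j ≤
      radius T r d j :=
    laneLoad_add_le_radius hm hT Spr hmono (hlane _ j (by simp [side]))
  refine exists_npSchedule_len_eq hT left (fun j => lane (left j) j)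
    (fun j => laneLoad (side (left j)) p (lane (left j)) j (lane (left j) j)) p hp
    (fun j => laneLoad_nonneg (fun j _ => (hp j).le) _ _) ?_ (fun j hj => ?_) (fun j hj => ?_)
  · intro j k hjk hside hlane'
    simp only [← hside] at hlane' ⊢
    exact laneLoad_add_le (fun j _ => (hp j).le) (by simp [side]) hjk hlane'
  · have := hbound j
    rwa [radius, max_eq_left (of_decide_eq_true hj)] at this
  · have := hbound j
    rwa [radius, max_eq_right (le_of_lt (not_le.mp (of_decide_eq_false hj)))] at this

end CliqueSchedule

theorem clique_instances_general (ι : Type) [Fintype ι] (α : ℝ)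
    (m : ℕ) (hm : 1 ≤ m) (w r d : ι → ℝ)
    (hw : ∀ j, 0 < w j)
    (hclique : ∃ T : ℝ, ∀ j, r j ≤ T ∧ T ≤ d j)
    (Spr : PreemptiveSchedule ι m w r d) :
    ∃ Snpr : NPSchedule ι m w r d,
      npEnergy α Snpr ≤ (2 * (2 - 1 / (m : ℝ))) ^ (α - 1) * pEnergy α Spr := by
  obtain ⟨T, hT⟩ := hclique
  obtain ⟨_, hmono⟩ := exists_linearOrder_monotone (radius T r d)
  obtain ⟨S, hS⟩ := exists_npSchedule_len_eq_execTime_div hm hw hT Spr hmono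
  exact ⟨S, (npEnergy_eq_of_len_eq α (speedFactor_pos hm) Spr S hS).le⟩

/-- Theorem 3 (clique instances): for `α > 1` and `m ≥ 1` processors, if the instance
is a clique instance (there is a time `T` contained in every job's active interval
`[r j, d j]`), then for every feasible preemptive schedule there exists a feasible
non-preemptive schedule whose energy is at most `(2(2 - 1/m))^(α-1)` times the energy
of the preemptive schedule. This yields a `(2(2 - 1/m))^(α-1)`-approximation for
`S|clique|E`. -/
theorem clique_instances (ι : Type) [Fintype ι] (α : ℝ) (hα : 1 < α)
    (m : ℕ) (hm : 1 ≤ m) (w r d : ι → ℝ)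
    (hw : ∀ j, 0 < w j) (hr : ∀ j, 0 ≤ r j) (hrd : ∀ j, r j < d j)
    (hclique : ∃ T : ℝ, ∀ j, r j ≤ T ∧ T ≤ d j)
    (Spr : PreemptiveSchedule ι m w r d) :
    ∃ Snpr : NPSchedule ι m w r d,
      npEnergy α Snpr ≤ (2 * (2 - 1 / (m : ℝ))) ^ (α - 1) * pEnergy α Spr :=
  clique_instances_general ι α m hm w r d hw hclique Spr
end

section
/- Fix a real α > 1 and an integer m ≥ 1. Let I_1 be a clique instance with job set J, let T = min{d_j(I_1) : j ∈ J}, and let I_2 be the instance on the same job set with w_j(I_2) = w_j(I_1), r_j(I_2) = r_j(I_1) + (T − r_j(I_1))/2 and d_j(I_2) = d_j(I_1) − (d_j(I_1) − T)/2 for every job j. Then for every feasible preemptive schedule S_1 for I_1 on m processors there exists a feasible preemptive schedule S_2 for I_2 on m processors with E(S_2) ≤ 2^(α−1) · E(S_1) (obtained by contracting time by the map t ↦ T + (t − T)/2 and doubling every job's speed). In particular, the minimum preemptive energy for I_2 is at most 2^(α−1) times the minimum preemptive energy for I_1. -/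
open MeasureTheory Set

/-- Proposition 4 (preemptive version): let `I₁` be a clique instance with
`T = min_j d j`, and let `I₂` be the instance with the same works and with release
dates `r j + (T - r j)/2` and deadlines `d j - (d j - T)/2` (each active interval is
halved toward `T`). Then for every feasible preemptive schedule `S₁` for `I₁` there is
a feasible preemptive schedule `S₂` for `I₂` with `E(S₂) ≤ 2^(α-1) · E(S₁)` (contract
time by `t ↦ T + (t - T)/2` and double every job's speed). -/
theorem clique_halving_preemptive (ι : Type) [Fintype ι] [Nonempty ι]
    (α : ℝ) (hα : 1 < α) (m : ℕ) (hm : 1 ≤ m) (w r d : ι → ℝ)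
    (hw : ∀ j, 0 < w j) (hr : ∀ j, 0 ≤ r j) (hrd : ∀ j, r j < d j)
    (T : ℝ) (hT : T = ⨅ j, d j) (hclique : ∀ j, r j ≤ T)
    (r₂ d₂ : ι → ℝ)
    (hr₂ : ∀ j, r₂ j = r j + (T - r j) / 2)
    (hd₂ : ∀ j, d₂ j = d j - (d j - T) / 2)
    (S₁ : PreemptiveSchedule ι m w r d) :
    ∃ S₂ : PreemptiveSchedule ι m w r₂ d₂,
      pEnergy α S₂ ≤ 2 ^ (α - 1) * pEnergy α S₁ := by
  -- the time contraction: `g t = 2 t - T` maps the new interval onto the old one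
  set g : ℝ → ℝ := fun t => 2 * t - T with hg
  have hgm : Measurable g := (measurable_const_mul 2).sub measurable_const
  have hvol : ∀ s : Set ℝ, volume (g ⁻¹' s) = ENNReal.ofReal (1/2) * volume s := by
    intro s
    have h : g ⁻¹' s = (fun t => (2:ℝ) * t) ⁻¹' ((fun u => u + (-T)) ⁻¹' s) := by
      ext t; simp [hg, sub_eq_add_neg]
    rw [h, Real.volume_preimage_mul_left (by norm_num : (2:ℝ) ≠ 0),
      measure_preimage_add_right]
    norm_num [abs_of_nonneg]
  refine ⟨{ speed := fun j => 2 * S₁.speed j,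
            A := fun i j => g ⁻¹' (S₁.A i j),
            speed_pos := fun j => by simpa using mul_pos two_pos (S₁.speed_pos j),
            measurableSet_A := fun i j => hgm (S₁.measurableSet_A i j),
            A_subset := ?_,
            disjoint_jobs := fun i j j' h =>
              Disjoint.preimage g (S₁.disjoint_jobs i j j' h),
            disjoint_procs := fun j i i' h =>
              Disjoint.preimage g (S₁.disjoint_procs j i i' h),
            work_done := ?_ }, ?_⟩
  · intro i j t ht
    have := S₁.A_subset i j ht
    simp only [mem_Icc, hg] at this ⊢
    rw [hr₂ j, hd₂ j]
    constructor <;> linarith [this.1, this.2]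
  · intro j
    have h2 : ∀ i : Fin m, (volume (g ⁻¹' (S₁.A i j))).toReal
        = (1/2 : ℝ) * (volume (S₁.A i j)).toReal := by
      intro i
      rw [hvol, ENNReal.toReal_mul, ENNReal.toReal_ofReal (by norm_num)]
    simp only [h2, ← Finset.mul_sum]
    have := S₁.work_done j
    ring_nf
    ring_nf at this
    linarith
  · unfold pEnergy
    rw [Finset.mul_sum]
    apply Finset.sum_le_sum
    intro j _
    simp only
    rw [Real.mul_rpow (by norm_num) (le_of_lt (S₁.speed_pos j))]
    ring_nf
    exact le_refl _
end

section
/- Fix a real α > 1 and an integer m ≥ 1. Let I_1 be a clique instance with job set J, let T = min{d_j(I_1) : j ∈ J}, and let I_2 be the instance on the same job set with w_j(I_2) = w_j(I_1), r_j(I_2) = r_j(I_1) + (T − r_j(I_1))/2 and d_j(I_2) = d_j(I_1) − (d_j(I_1) − T)/2 for every job j. Then for every feasible non-preemptive schedule S_1 for I_1 on m processors there exists a feasible non-preemptive schedule S_2 for I_2 on m processors with E(S_2) ≤ 2^(α−1) · E(S_1). -/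
/-- Proposition 4 (non-preemptive version): let `I₁` be a clique instance with
`T = min_j d j`, and let `I₂` be the instance with the same works and with release
dates `r j + (T - r j)/2` and deadlines `d j - (d j - T)/2` (each active interval is
halved toward `T`). Then for every feasible non-preemptive schedule `S₁` for `I₁`
there is a feasible non-preemptive schedule `S₂` for `I₂` with
`E(S₂) ≤ 2^(α-1) · E(S₁)`. -/
theorem clique_halving_nonpreemptive (ι : Type) [Fintype ι] [Nonempty ι]
    (α : ℝ) (hα : 1 < α) (m : ℕ) (hm : 1 ≤ m) (w r d : ι → ℝ)
    (hw : ∀ j, 0 < w j) (hr : ∀ j, 0 ≤ r j) (hrd : ∀ j, r j < d j)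
    (T : ℝ) (hT : T = ⨅ j, d j) (hclique : ∀ j, r j ≤ T)
    (r₂ d₂ : ι → ℝ)
    (hr₂ : ∀ j, r₂ j = r j + (T - r j) / 2)
    (hd₂ : ∀ j, d₂ j = d j - (d j - T) / 2)
    (S₁ : NPSchedule ι m w r d) :
    ∃ S₂ : NPSchedule ι m w r₂ d₂,
      npEnergy α S₂ ≤ 2 ^ (α - 1) * npEnergy α S₁ := by
  refine ⟨{ proc := S₁.proc
            start := fun j => (S₁.start j + T) / 2
            len := fun j => S₁.len j / 2
            len_pos := fun j => by have := S₁.len_pos j; linarith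
            start_ge := fun j => by
              have := S₁.start_ge j; rw [hr₂ j]; linarith
            end_le := fun j => by
              have := S₁.end_le j; rw [hd₂ j]; linarith
            disjoint_jobs := fun j j' hne hp => by
              have h := S₁.disjoint_jobs j j' hne hp
              rw [Set.disjoint_left] at h ⊢
              intro x hx hx'
              refine h (a := 2 * x - T) ?_ ?_
              · obtain ⟨h1, h2⟩ := hx; constructor <;> [linarith; linarith]
              · obtain ⟨h1, h2⟩ := hx'; constructor <;> [linarith; linarith] }, ?_⟩
  unfold npEnergy
  rw [Finset.mul_sum]
  apply le_of_eq
  apply Finset.sum_congr rfl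
  intro j _
  have hl := S₁.len_pos j
  have hw' := (hw j).le
  have : w j / (S₁.len j / 2) = 2 * (w j / S₁.len j) := by
    field_simp
  simp only [this]
  rw [Real.mul_rpow (by norm_num) (div_nonneg hw' hl.le)]
  ring
end

section
/- Fix a real α > 1 and an integer m ≥ 1. Suppose the instance is agreeable, i.e., for any two jobs with r_j ≤ r_{j'} one has d_j ≤ d_{j'}. Then for every feasible preemptive schedule S_pr on m processors there exists a feasible non-preemptive schedule S_npr on m processors with E(S_npr) ≤ (4·(2 − 1/m))^(α−1) · E(S_pr). In particular this yields a (4(2 − 1/m))^(α−1)-approximation (which is less than 2^(3α−3)) for the problem S|agreeable|E. -/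
open MeasureTheory Set

namespace AgreeableAux

open scoped Classical ENNReal

/-- Sum of volumes of pairwise disjoint measurable subsets of `Icc a b` is at most `b - a`. -/
lemma vol_sum_le {κ : Type*} (s : Finset κ) (B : κ → Set ℝ) (a b : ℝ) (hab : a ≤ b)
    (hmeas : ∀ k ∈ s, MeasurableSet (B k))
    (hdisj : ∀ k ∈ s, ∀ k' ∈ s, k ≠ k' → Disjoint (B k) (B k'))
    (hsub : ∀ k ∈ s, B k ⊆ Icc a b) :
    ∑ k ∈ s, (volume (B k)).toReal ≤ b - a := by
  have hd : (s : Set κ).PairwiseDisjoint B := fun x hx y hy hxy => hdisj x hx y hy hxy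
  have h1 : ∑ k ∈ s, volume (B k) = volume (⋃ k ∈ s, B k) :=
    (measure_biUnion_finset hd (fun k hk => hmeas k hk)).symm
  have h2 : volume (⋃ k ∈ s, B k) ≤ volume (Icc a b) :=
    measure_mono (Set.iUnion₂_subset hsub)
  rw [Real.volume_Icc] at h2
  have hne : ∀ k ∈ s, volume (B k) ≠ ∞ := by
    intro k hk
    refine ne_top_of_le_ne_top (ENNReal.ofReal_ne_top (r := b - a)) ?_
    rw [← Real.volume_Icc]
    exact measure_mono (hsub k hk)
  calc ∑ k ∈ s, (volume (B k)).toReal = (∑ k ∈ s, volume (B k)).toReal :=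
        (ENNReal.toReal_sum hne).symm
    _ ≤ (ENNReal.ofReal (b - a)).toReal :=
        ENNReal.toReal_mono ENNReal.ofReal_ne_top (h1 ▸ h2)
    _ = b - a := ENNReal.toReal_ofReal (by linarith)

variable {m : ℕ}

/-- An index minimizing `a`. -/
noncomputable def pick [NeZero m] (a : Fin m → ℝ) : Fin m :=
  Classical.choose (Finset.exists_min_image Finset.univ a Finset.univ_nonempty)

lemma pick_le [NeZero m] (a : Fin m → ℝ) (i : Fin m) : a (pick a) ≤ a i := by
  have h := Classical.choose_spec
    (Finset.exists_min_image Finset.univ a Finset.univ_nonempty)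
  exact h.2 i (Finset.mem_univ i)

/-- Machine availability times after scheduling the first `k` jobs greedily. -/
noncomputable def gAvail [NeZero m] (R L : ℕ → ℝ) : ℕ → Fin m → ℝ :=
  Nat.rec (fun _ => 0)
    (fun k a => Function.update a (pick a) (max (R k) (a (pick a)) + L k))

/-- Machine chosen for job `k`. -/
noncomputable def gProc [NeZero m] (R L : ℕ → ℝ) (k : ℕ) : Fin m :=
  pick (gAvail (m := m) R L k)

/-- Start time of job `k`. -/
noncomputable def gStart [NeZero m] (R L : ℕ → ℝ) (k : ℕ) : ℝ :=
  max (R k) (gAvail (m := m) R L k (gProc (m := m) R L k))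

/-- Completion time of job `k`. -/
noncomputable def gC [NeZero m] (R L : ℕ → ℝ) (k : ℕ) : ℝ :=
  gStart (m := m) R L k + L k

lemma gAvail_succ [NeZero m] (R L : ℕ → ℝ) (k : ℕ) :
    gAvail (m := m) R L (k + 1) =
      Function.update (gAvail (m := m) R L k) (gProc (m := m) R L k) (gC (m := m) R L k) := rfl

lemma gAvail_le_succ [NeZero m] {R L : ℕ → ℝ} (hL : ∀ j, 0 ≤ L j) (k : ℕ) (i : Fin m) :
    gAvail (m := m) R L k i ≤ gAvail (m := m) R L (k + 1) i := by
  rw [gAvail_succ]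
  rcases eq_or_ne i (gProc (m := m) R L k) with h | h
  · rw [h, Function.update_self]
    have h3 : gC (m := m) R L k = gStart (m := m) R L k + L k := rfl
    rw [h3]
    have h1 : gAvail (m := m) R L k (gProc (m := m) R L k) ≤ gStart (m := m) R L k :=
      le_max_right _ _
    have h2 := hL k
    linarith
  · rw [Function.update_of_ne h]

lemma gAvail_mono [NeZero m] {R L : ℕ → ℝ} (hL : ∀ j, 0 ≤ L j) {k k' : ℕ} (hkk : k ≤ k')
    (i : Fin m) : gAvail (m := m) R L k i ≤ gAvail (m := m) R L k' i := by
  induction k' with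
  | zero => simp_all
  | succ k' IH =>
    rcases Nat.lt_or_ge k (k' + 1) with h | h
    · exact le_trans (IH (Nat.lt_succ_iff.mp h)) (gAvail_le_succ hL k' i)
    · have : k = k' + 1 := le_antisymm hkk h
      subst this; rfl

lemma gC_eq_avail [NeZero m] (R L : ℕ → ℝ) (k : ℕ) :
    gAvail (m := m) R L (k + 1) (gProc (m := m) R L k) = gC (m := m) R L k := by
  rw [gAvail_succ, Function.update_self]

lemma gC_le_gStart [NeZero m] {R L : ℕ → ℝ} (hL : ∀ j, 0 ≤ L j) {k k' : ℕ} (hkk : k < k')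
    (hp : gProc (m := m) R L k = gProc (m := m) R L k') :
    gC (m := m) R L k ≤ gStart (m := m) R L k' := by
  calc gC (m := m) R L k = gAvail (m := m) R L (k + 1) (gProc (m := m) R L k) :=
        (gC_eq_avail R L k).symm
    _ = gAvail (m := m) R L (k + 1) (gProc (m := m) R L k') := by rw [hp]
    _ ≤ gAvail (m := m) R L k' (gProc (m := m) R L k') := gAvail_mono hL hkk _
    _ ≤ gStart (m := m) R L k' := le_max_right _ _

/-- The key potential estimate: total availability overhang beyond `y` is bounded by the
lengths of jobs completing after `y`, provided all releases so far are at most `y`. -/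
lemma Phi_bound [NeZero m] {R L : ℕ → ℝ} (hL : ∀ j, 0 ≤ L j) (k : ℕ) (y : ℝ) (hy : 0 ≤ y)
    (hR : ∀ j, j < k → R j ≤ y) :
    ∑ i : Fin m, max (gAvail (m := m) R L k i - y) 0 ≤
      ∑ j ∈ (Finset.range k).filter (fun j => y < gC (m := m) R L j), L j := by
  induction k with
  | zero =>
    have h0 : ∀ i : Fin m, max (gAvail (m := m) R L 0 i - y) 0 = 0 := fun i => by
      show max ((0:ℝ) - y) 0 = 0
      rw [max_eq_right]; linarith
    rw [Finset.sum_eq_zero (fun i _ => h0 i)]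
    simp
  | succ k IH =>
    have hR' : ∀ j, j < k → R j ≤ y := fun j hj => hR j (Nat.lt_succ_of_lt hj)
    have IH' := IH hR'
    set a := gAvail (m := m) R L k with ha
    set i0 := gProc (m := m) R L k with hi0
    -- LHS transformation
    have hupd : (fun i : Fin m => max (gAvail (m := m) R L (k+1) i - y) 0) =
        Function.update (fun i => max (a i - y) 0) i0 (max (gC (m := m) R L k - y) 0) := by
      rw [gAvail_succ]
      funext i
      rcases eq_or_ne i i0 with h | h
      · subst h; rw [Function.update_self, Function.update_self]
      · rw [Function.update_of_ne h, Function.update_of_ne h]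
    have hLHS : ∑ i : Fin m, max (gAvail (m := m) R L (k+1) i - y) 0 =
        max (gC (m := m) R L k - y) 0 + (∑ i : Fin m, max (a i - y) 0 - max (a i0 - y) 0) := by
      rw [hupd, Finset.sum_update_of_mem (Finset.mem_univ i0)]
      rw [Finset.sdiff_singleton_eq_erase, Finset.sum_erase_eq_sub (Finset.mem_univ i0)]
    -- RHS transformation
    have hRHS : ∑ j ∈ (Finset.range (k+1)).filter (fun j => y < gC (m := m) R L j), L j =
        (∑ j ∈ (Finset.range k).filter (fun j => y < gC (m := m) R L j), L j) +
          (if y < gC (m := m) R L k then L k else 0) := by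
      rw [Finset.range_add_one, Finset.filter_insert]
      split_ifs with h
      · rw [Finset.sum_insert (by simp)]
        ring
      · simp
    rw [hLHS, hRHS]
    have hkey : max (gC (m := m) R L k - y) 0 ≤ max (a i0 - y) 0 + (if y < gC (m := m) R L k then L k else 0) := by
      split_ifs with h
      · rw [max_eq_left (by linarith)]
        have h1 : gC (m := m) R L k = max (R k) (a i0) + L k := rfl
        have h2 : R k ≤ y := hR k (Nat.lt_succ_self k)
        have h3 : max (R k) (a i0) ≤ y + max (a i0 - y) 0 := by
          rcases le_total (R k) (a i0) with h4 | h4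
          · rw [max_eq_right h4]
            have := le_max_left (a i0 - y) 0
            linarith
          · rw [max_eq_left h4]
            have := le_max_right (a i0 - y) (0:ℝ)
            linarith
        linarith
      · have := le_max_left (a i0 - y) (0:ℝ)
        have := le_max_right (a i0 - y) (0:ℝ)
        simp only [add_zero]
        rw [max_le_iff]
        constructor
        · linarith
        · exact le_max_right _ _
    linarith

/-- Feasibility for `m ≥ 2` machines: each job completes by the midpoint of its window. -/
lemma feas2 [NeZero m] (hm2 : 2 ≤ m) {n : ℕ} (R L D : ℕ → ℝ) (c : ℝ) (hc : 6 ≤ c)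
    (hR0 : ∀ k, 0 ≤ R k)
    (hRmono : ∀ j k, j ≤ k → k < n → R j ≤ R k)
    (hDmono : ∀ j k, j ≤ k → k < n → D j ≤ D k)
    (hRD : ∀ k, k < n → R k ≤ D k)
    (hL : ∀ j, 0 ≤ L j)
    (hLle : ∀ k, k < n → L k ≤ (D k - R k) / c)
    (hsum : ∀ k, k < n → ∀ y : ℝ, 0 ≤ y → y ≤ D k → ∀ P : Finset ℕ,
      P ⊆ Finset.range (k + 1) → (∀ j ∈ P, y ≤ R j) →
      ∑ j ∈ P, L j ≤ (m : ℝ) / c * (D k - y)) :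
    ∀ k, k < n → gC (m := m) R L k ≤ (R k + D k) / 2 := by
  intro k
  induction k using Nat.strong_induction_on with
  | _ k IH =>
    intro hk
    have hcpos : (0:ℝ) < c := by linarith
    have hrd : R k ≤ D k := hRD k hk
    have hLk : L k ≤ (D k - R k) / c := hLle k hk
    have hgap : (D k - R k) / c ≤ (D k - R k) / 6 := by
      apply div_le_div_of_nonneg_left (by linarith) (by norm_num) hc
    set i0 := gProc (m := m) R L k with hi0
    set μ := gAvail (m := m) R L k i0 with hμ
    rcases le_or_gt μ (R k) with hcase | hcase
    · -- starts at release
      have : gC (m := m) R L k = R k + L k := by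
        unfold gC gStart
        rw [max_eq_left hcase]
      rw [this]
      linarith
    · -- all machines busy
      have hΦ := Phi_bound (m := m) (R := R) (L := L) hL k (R k) (hR0 k)
        (fun j hj => hRmono j k (Nat.le_of_lt hj) hk)
      set P := (Finset.range k).filter (fun j => R k < gC (m := m) R L j) with hP
      set y : ℝ := max (2 * R k - D k) 0 with hy
      have hy0 : 0 ≤ y := le_max_right _ _
      have hyD : y ≤ D k := by
        rw [max_le_iff]
        constructor
        · linarith
        · linarith [hR0 k]
      have hyR : ∀ j ∈ P, y ≤ R j := by
        intro j hj
        rw [hP, Finset.mem_filter, Finset.mem_range] at hj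
        obtain ⟨hjk, hjC⟩ := hj
        have hjn : j < n := hjk.trans hk
        have hIH := IH j hjk hjn
        have hDj : D j ≤ D k := hDmono j k (Nat.le_of_lt hjk) hk
        rw [max_le_iff]
        exact ⟨by linarith, hR0 j⟩
      have hPsub : P ⊆ Finset.range (k + 1) :=
        (Finset.filter_subset _ _).trans (Finset.range_subset_range.mpr (Nat.le_succ k))
      have hsum' := hsum k hk y hy0 hyD P hPsub hyR
      have hDky : D k - y ≤ 2 * (D k - R k) := by
        have : 2 * R k - D k ≤ y := le_max_left _ _
        linarith
      -- lower bound on the potential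
      have hlow : (m : ℝ) * (μ - R k) ≤ ∑ i : Fin m, max (gAvail (m := m) R L k i - R k) 0 := by
        have h1 : ∀ i : Fin m, μ - R k ≤ max (gAvail (m := m) R L k i - R k) 0 := by
          intro i
          have := pick_le (gAvail (m := m) R L k) i
          have := le_max_left (gAvail (m := m) R L k i - R k) (0:ℝ)
          rw [hμ, hi0]
          unfold gProc
          linarith
        calc (m : ℝ) * (μ - R k) = ∑ _i : Fin m, (μ - R k) := by
              rw [Finset.sum_const, Finset.card_univ, Fintype.card_fin, nsmul_eq_mul]
          _ ≤ _ := Finset.sum_le_sum (fun i _ => h1 i)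
      have hmpos : (0:ℝ) < m := by
        have : (2:ℝ) ≤ m := by exact_mod_cast hm2
        linarith
      have hμle : μ - R k ≤ 2 * (D k - R k) / c := by
        have h2 : (m : ℝ) * (μ - R k) ≤ (m : ℝ) / c * (2 * (D k - R k)) := by
          calc (m : ℝ) * (μ - R k) ≤ ∑ j ∈ P, L j := le_trans hlow (hΦ.trans_eq rfl)
            _ ≤ (m : ℝ) / c * (D k - y) := hsum'
            _ ≤ (m : ℝ) / c * (2 * (D k - R k)) := by
                apply mul_le_mul_of_nonneg_left hDky (by positivity)
        have h3 : (m : ℝ) / c * (2 * (D k - R k)) = (m : ℝ) * (2 * (D k - R k) / c) := by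
          field_simp
        rw [h3] at h2
        exact le_of_mul_le_mul_left h2 hmpos
      have hCk : gC (m := m) R L k = μ + L k := by
        unfold gC gStart
        rw [max_eq_right (le_of_lt hcase)]
      rw [hCk]
      have h6 : 2 * (D k - R k) / c ≤ 2 * (D k - R k) / 6 := by
        apply div_le_div_of_nonneg_left (by linarith) (by norm_num) hc
      linarith

/-- Chain bound for a single machine. -/
lemma chain1 {R L : ℕ → ℝ} (hR0 : ∀ k, 0 ≤ R k) (hL : ∀ j, 0 ≤ L j) :
    ∀ k, ∃ q, q ≤ k ∧ gC (m := 1) R L k ≤ R q + ∑ j ∈ Finset.Icc q k, L j := by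
  have havail : ∀ k i, gAvail (m := 1) R L (k + 1) i = gC (m := 1) R L k := by
    intro k i
    have : i = gProc (m := 1) R L k := Subsingleton.elim _ _
    rw [this, gC_eq_avail]
  intro k
  induction k with
  | zero =>
    refine ⟨0, le_refl _, ?_⟩
    have h0 : gAvail (m := 1) R L 0 (gProc (m := 1) R L 0) = 0 := rfl
    have hs : gStart (m := 1) R L 0 = R 0 := by
      unfold gStart
      rw [h0, max_eq_left (hR0 0)]
    have : gC (m := 1) R L 0 = R 0 + L 0 := by
      rw [show gC (m := 1) R L 0 = gStart (m := 1) R L 0 + L 0 from rfl, hs]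
    rw [this, Finset.Icc_self, Finset.sum_singleton]
  | succ k IH =>
    obtain ⟨q, hq, hle⟩ := IH
    have hav : gAvail (m := 1) R L (k+1) (gProc (m := 1) R L (k+1)) = gC (m := 1) R L k :=
      havail k _
    rcases le_total (gC (m := 1) R L k) (R (k+1)) with h | h
    · refine ⟨k+1, le_refl _, ?_⟩
      have hs : gStart (m := 1) R L (k+1) = R (k+1) := by
        unfold gStart
        rw [hav, max_eq_left h]
      have hCC : gC (m := 1) R L (k+1) = R (k+1) + L (k+1) := by
        rw [show gC (m := 1) R L (k+1) = gStart (m := 1) R L (k+1) + L (k+1) from rfl, hs]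
      rw [hCC, Finset.Icc_self, Finset.sum_singleton]
    · refine ⟨q, hq.trans (Nat.le_succ k), ?_⟩
      have hs : gStart (m := 1) R L (k+1) = gC (m := 1) R L k := by
        unfold gStart
        rw [hav, max_eq_right h]
      have hC : gC (m := 1) R L (k+1) = gC (m := 1) R L k + L (k+1) := by
        rw [show gC (m := 1) R L (k+1) = gStart (m := 1) R L (k+1) + L (k+1) from rfl, hs]
      rw [hC, Finset.sum_Icc_succ_top (hq.trans (Nat.le_succ k))]
      linarith

end AgreeableAux

/-- Theorem 4 (agreeable instances): for `α > 1` and `m ≥ 1` processors, if the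
instance is agreeable (for any two jobs, `r j ≤ r j'` implies `d j ≤ d j'`), then for
every feasible preemptive schedule there exists a feasible non-preemptive schedule
whose energy is at most `(4(2 - 1/m))^(α-1)` times the energy of the preemptive
schedule; moreover `(4(2 - 1/m))^(α-1) < 2^(3α-3)`. This yields a
`(4(2 - 1/m))^(α-1)`-approximation for `S|agreeable|E`. -/
theorem agreeable_instances (ι : Type) [Fintype ι] (α : ℝ) (hα : 1 < α)
    (m : ℕ) (hm : 1 ≤ m) (w r d : ι → ℝ)
    (hw : ∀ j, 0 < w j) (hr : ∀ j, 0 ≤ r j) (hrd : ∀ j, r j < d j)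
    (hagree : ∀ j j', r j ≤ r j' → d j ≤ d j')
    (Spr : PreemptiveSchedule ι m w r d) :
    (∃ Snpr : NPSchedule ι m w r d,
        npEnergy α Snpr ≤ (4 * (2 - 1 / (m : ℝ))) ^ (α - 1) * pEnergy α Spr) ∧
    (4 * (2 - 1 / (m : ℝ))) ^ (α - 1) < 2 ^ (3 * α - 3) := by
  classical
  have hm1R : (1:ℝ) ≤ (m:ℝ) := by exact_mod_cast hm
  have hmpos : (0:ℝ) < (m:ℝ) := by linarith
  have hminv_pos : 0 < 1 / (m:ℝ) := by positivity
  have hminv_le : 1 / (m:ℝ) ≤ 1 := by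
    rw [div_le_one hmpos]; linarith
  set c : ℝ := 4 * (2 - 1 / (m:ℝ)) with hcdef
  have hc4 : 4 ≤ c := by rw [hcdef]; nlinarith
  have hc8 : c < 8 := by rw [hcdef]; nlinarith
  have hcpos : (0:ℝ) < c := by linarith
  have hstrict : c ^ (α - 1) < 2 ^ (3 * α - 3) := by
    have h1 : c ^ (α - 1) < (8:ℝ) ^ (α - 1) :=
      Real.rpow_lt_rpow (by linarith) hc8 (by linarith)
    have h2 : (8:ℝ) ^ (α - 1) = 2 ^ (3 * α - 3) := by
      have h8 : (8:ℝ) = (2:ℝ) ^ (3:ℝ) := by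
        rw [show (3:ℝ) = ((3:ℕ):ℝ) by norm_num, Real.rpow_natCast]; norm_num
      rw [h8, ← Real.rpow_mul (by norm_num : (0:ℝ) ≤ 2)]
      ring_nf
    linarith
  refine ⟨?_, hstrict⟩
  by_cases hE : IsEmpty ι
  · let S : NPSchedule ι m w r d :=
      ⟨fun j => isEmptyElim j, fun j => isEmptyElim j, fun j => isEmptyElim j,
        fun j => isEmptyElim j, fun j => isEmptyElim j, fun j => isEmptyElim j,
        fun j => isEmptyElim j⟩
    refine ⟨S, ?_⟩
    have h1 : npEnergy α S = 0 := by
      unfold npEnergy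
      rw [Finset.univ_eq_empty, Finset.sum_empty]
    rw [h1]
    have h2 : pEnergy (m := m) (w := w) (r := r) (d := d) α Spr = 0 := by
      unfold pEnergy
      rw [Finset.univ_eq_empty, Finset.sum_empty]
    rw [h2, mul_zero]
  · haveI hne : Nonempty ι := not_isEmpty_iff.mp hE
    haveI : NeZero m := ⟨by omega⟩
    set n := Fintype.card ι with hn
    set e0 := Fintype.equivFin ι with he0
    set π : Fin n ≃ ι := (Tuple.sort (r ∘ e0.symm)).trans e0.symm with hπdef
    have hπ : Monotone (fun k : Fin n => r (π k)) := Tuple.monotone_sort (r ∘ e0.symm)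
    set jb : ℕ → ι := fun k => if h : k < n then π ⟨k, h⟩ else Classical.arbitrary ι with hjbdef
    set T : ι → ℝ := fun j => ∑ i, (volume (Spr.A i j)).toReal with hTdef
    set ll : ι → ℝ := fun j => T j / c with hlldef
    set R : ℕ → ℝ := fun k => r (jb k) with hRdef
    set Dd : ℕ → ℝ := fun k => d (jb k) with hDdef
    set L : ℕ → ℝ := fun k => ll (jb k) with hLdef
    have hTw : ∀ j, T j = w j / Spr.speed j := by
      intro j
      rw [eq_div_iff (ne_of_gt (Spr.speed_pos j)), mul_comm]
      exact Spr.work_done j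
    have hTpos : ∀ j, 0 < T j := fun j => by
      rw [hTw j]; exact div_pos (hw j) (Spr.speed_pos j)
    have hTle : ∀ j, T j ≤ d j - r j := by
      intro j
      have h := AgreeableAux.vol_sum_le (Finset.univ : Finset (Fin m)) (fun i => Spr.A i j)
        (r j) (d j) (le_of_lt (hrd j)) (fun i _ => Spr.measurableSet_A i j)
        (fun i _ i' _ hii => Spr.disjoint_procs j i i' hii) (fun i _ => Spr.A_subset i j)
      exact h
    have hlpos : ∀ j, 0 < ll j := fun j => div_pos (hTpos j) hcpos
    have hlle : ∀ j, ll j ≤ (d j - r j) / c := fun j =>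
      (div_le_div_iff_of_pos_right hcpos).mpr (hTle j)
    have hjblt : ∀ (k : ℕ) (h : k < n), jb k = π ⟨k, h⟩ := by
      intro k h
      show (if h : k < n then π ⟨k, h⟩ else Classical.arbitrary ι) = π ⟨k, h⟩
      exact dif_pos h
    have hRmono : ∀ j k, j ≤ k → k < n → R j ≤ R k := by
      intro j k hjk hk
      have hj : j < n := lt_of_le_of_lt hjk hk
      show r (jb j) ≤ r (jb k)
      rw [hjblt j hj, hjblt k hk]
      exact hπ (show (⟨j, hj⟩ : Fin n) ≤ ⟨k, hk⟩ from hjk)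
    have hDmono : ∀ j k, j ≤ k → k < n → Dd j ≤ Dd k := fun j k hjk hk =>
      hagree _ _ (hRmono j k hjk hk)
    have hRD : ∀ k, R k < Dd k := fun k => hrd (jb k)
    have hR0 : ∀ k, 0 ≤ R k := fun k => hr (jb k)
    have hL0 : ∀ k, 0 ≤ L k := fun k => le_of_lt (hlpos (jb k))
    have hLle : ∀ k, L k ≤ (Dd k - R k) / c := fun k => hlle (jb k)
    have hjbinj : ∀ j k, j < n → k < n → jb j = jb k → j = k := by
      intro j k hj hk heq
      rw [hjblt j hj, hjblt k hk] at heq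
      have h2 := π.injective heq
      simpa using congrArg Fin.val h2
    have hsum : ∀ k, k < n → ∀ y : ℝ, 0 ≤ y → y ≤ Dd k → ∀ P : Finset ℕ,
        P ⊆ Finset.range (k + 1) → (∀ j ∈ P, y ≤ R j) →
        ∑ j ∈ P, L j ≤ (m : ℝ) / c * (Dd k - y) := by
      intro k hk y hy0 hyD P hPsub hPy
      have hmem : ∀ j ∈ P, j ≤ k ∧ j < n := by
        intro j hj
        have := hPsub hj
        rw [Finset.mem_range, Nat.lt_succ_iff] at this
        exact ⟨this, lt_of_le_of_lt this hk⟩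
      have hinner : ∀ i : Fin m, ∑ j ∈ P, (volume (Spr.A i (jb j))).toReal ≤ Dd k - y := by
        intro i
        apply AgreeableAux.vol_sum_le P (fun j => Spr.A i (jb j)) y (Dd k) hyD
          (fun j _ => Spr.measurableSet_A i (jb j))
        · intro a ha b hb hab
          apply Spr.disjoint_jobs i
          intro hcon
          exact hab (hjbinj a b (hmem a ha).2 (hmem b hb).2 hcon)
        · intro j hj
          refine (Spr.A_subset i (jb j)).trans (Icc_subset_Icc (hPy j hj) ?_)
          exact hDmono j k (hmem j hj).1 hk
      have hTsum : ∑ j ∈ P, T (jb j) ≤ (m:ℝ) * (Dd k - y) := by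
        have hswap : ∑ j ∈ P, T (jb j) =
            ∑ i : Fin m, ∑ j ∈ P, (volume (Spr.A i (jb j))).toReal := by
          rw [Finset.sum_comm]
        rw [hswap]
        calc ∑ i : Fin m, ∑ j ∈ P, (volume (Spr.A i (jb j))).toReal
            ≤ ∑ _i : Fin m, (Dd k - y) := Finset.sum_le_sum (fun i _ => hinner i)
          _ = (m:ℝ) * (Dd k - y) := by
              rw [Finset.sum_const, Finset.card_univ, Fintype.card_fin, nsmul_eq_mul]
      have hLsum : ∑ j ∈ P, L j = (∑ j ∈ P, T (jb j)) / c := by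
        rw [Finset.sum_div]
      rw [hLsum]
      calc (∑ j ∈ P, T (jb j)) / c ≤ ((m:ℝ) * (Dd k - y)) / c :=
            (div_le_div_iff_of_pos_right hcpos).mpr hTsum
        _ = (m:ℝ) / c * (Dd k - y) := by ring
    have hfeas : ∀ k, k < n → AgreeableAux.gC (m := m) R L k ≤ Dd k := by
      rcases eq_or_lt_of_le hm with hm1 | hm2
      · -- m = 1
        intro k hk
        obtain ⟨q, hq, hle⟩ := AgreeableAux.chain1 (R := R) (L := L) hR0 hL0 k
        have hqn : q < n := lt_of_le_of_lt hq hk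
        have hRqk : R q ≤ R k := hRmono q k hq hk
        have hsub : Finset.Icc q k ⊆ Finset.range (k + 1) := by
          intro j hj
          rw [Finset.mem_range, Nat.lt_succ_iff]
          exact (Finset.mem_Icc.mp hj).2
        have hrel : ∀ j ∈ Finset.Icc q k, R q ≤ R j := by
          intro j hj
          obtain ⟨h1, h2⟩ := Finset.mem_Icc.mp hj
          exact hRmono q j h1 (lt_of_le_of_lt h2 hk)
        have h := hsum k hk (R q) (hR0 q) (by linarith [hRD k]) (Finset.Icc q k) hsub hrel
        have hc1 : (m:ℝ) / c ≤ 1 := by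
          rw [div_le_one hcpos]
          have : (m:ℝ) = 1 := by exact_mod_cast hm1.symm
          rw [this]; linarith
        have hnn : 0 ≤ Dd k - R q := by linarith [hRD k]
        have h2 : ∑ j ∈ Finset.Icc q k, L j ≤ Dd k - R q := by
          calc ∑ j ∈ Finset.Icc q k, L j ≤ (m:ℝ)/c * (Dd k - R q) := h
            _ ≤ 1 * (Dd k - R q) := mul_le_mul_of_nonneg_right hc1 hnn
            _ = Dd k - R q := one_mul _
        -- for m = 1, gC (m := m) = gC (m := 1)
        have hm1' : m = 1 := hm1.symm
        subst hm1'
        linarith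
      · -- 2 ≤ m
        intro k hk
        have hc6 : 6 ≤ c := by
          have h12 : (1:ℝ)/(m:ℝ) ≤ 1/2 := by
            apply div_le_div_of_nonneg_left (by norm_num) (by norm_num)
            exact_mod_cast hm2
          rw [hcdef]; linarith
        have h := AgreeableAux.feas2 (m := m) hm2 R L Dd c hc6 hR0 hRmono hDmono
          (fun k hk => le_of_lt (hRD k)) hL0 (fun k _ => hLle k) hsum k hk
        linarith [hRD k]
    -- build the non-preemptive schedule
    set idx : ι → ℕ := fun j => ((π.symm j : Fin n) : ℕ) with hidxdef
    have hidxlt : ∀ j, idx j < n := fun j => (π.symm j).isLt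
    have hjbidx : ∀ j, jb (idx j) = j := by
      intro j
      rw [hjblt _ (hidxlt j)]
      have h1 : (⟨idx j, hidxlt j⟩ : Fin n) = π.symm j := by
        apply Fin.val_injective
        rfl
      rw [h1]
      exact π.apply_symm_apply j
    have hidxinj : Function.Injective idx := by
      intro a b hab
      have h1 : π.symm a = π.symm b := Fin.val_injective hab
      exact π.symm.injective h1
    have hLidx : ∀ j, ll j = L (idx j) := by
      intro j
      show ll j = ll (jb (idx j))
      rw [hjbidx j]
    have hend : ∀ j, AgreeableAux.gStart (m := m) R L (idx j) + ll j ≤ d j := by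
      intro j
      rw [hLidx j]
      have h1 : AgreeableAux.gStart (m := m) R L (idx j) + L (idx j)
          = AgreeableAux.gC (m := m) R L (idx j) := rfl
      rw [h1]
      calc AgreeableAux.gC (m := m) R L (idx j) ≤ Dd (idx j) := hfeas (idx j) (hidxlt j)
        _ = d j := by show d (jb (idx j)) = d j; rw [hjbidx j]
    have hdisj : ∀ a b : ι, idx a < idx b →
        AgreeableAux.gProc (m := m) R L (idx a) = AgreeableAux.gProc (m := m) R L (idx b) →
        Disjoint (Set.Ioo (AgreeableAux.gStart (m := m) R L (idx a))
            (AgreeableAux.gStart (m := m) R L (idx a) + ll a))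
          (Set.Ioo (AgreeableAux.gStart (m := m) R L (idx b))
            (AgreeableAux.gStart (m := m) R L (idx b) + ll b)) := by
      intro a b hab hp
      have h1 : AgreeableAux.gC (m := m) R L (idx a) ≤ AgreeableAux.gStart (m := m) R L (idx b) :=
        AgreeableAux.gC_le_gStart hL0 hab hp
      have h2 : AgreeableAux.gStart (m := m) R L (idx a) + ll a
          = AgreeableAux.gC (m := m) R L (idx a) := by
        rw [hLidx a]; rfl
      rw [Set.disjoint_left]
      intro x hx hx'
      rw [Set.mem_Ioo] at hx hx'
      have := hx.2
      rw [h2] at this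
      linarith [hx'.1]
    refine ⟨{ proc := fun j => AgreeableAux.gProc (m := m) R L (idx j)
            , start := fun j => AgreeableAux.gStart (m := m) R L (idx j)
            , len := ll
            , len_pos := hlpos
            , start_ge := ?_
            , end_le := hend
            , disjoint_jobs := ?_ }, ?_⟩
    · intro j
      have : R (idx j) = r j := by show r (jb (idx j)) = r j; rw [hjbidx j]
      calc r j = R (idx j) := this.symm
        _ ≤ AgreeableAux.gStart (m := m) R L (idx j) := le_max_left _ _
    · intro j j' hjj hp
      rcases lt_trichotomy (idx j) (idx j') with h | h | h
      · exact hdisj j j' h hp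
      · exact absurd (hidxinj h) hjj
      · exact (hdisj j' j h hp.symm).symm
    · -- energy bound
      show (∑ j, w j * (w j / ll j) ^ (α - 1)) ≤ c ^ (α - 1) * pEnergy α Spr
      unfold pEnergy
      rw [Finset.mul_sum]
      apply le_of_eq
      apply Finset.sum_congr rfl
      intro j _
      have hs := Spr.speed_pos j
      have hspeed : w j / ll j = c * Spr.speed j := by
        have h2 : ll j = w j / (c * Spr.speed j) := by
          show T j / c = _
          rw [hTw j, div_div, mul_comm]
        rw [h2, div_div_cancel₀ (ne_of_gt (hw j))]
      rw [hspeed, Real.mul_rpow (le_of_lt hcpos) (le_of_lt hs)]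
      ring
end
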